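/- arXiv:1701.00375 — 5 statements merged into one kernel-verified Lean document; each statement's English description precedes it below -/
import Mathlib

section
/- Let N : {1,2,…} → ℚ be any sequence and define a_i := (1/i)·Σ_{d ∣ i} μ(i/d)·N_d and π_w(N) := Σ_{λ : |λ| = w} (−1)^{ℓ(λ)} · Π_{i≥1} C(a_i, λ_i), the sum over all partitions λ of weight w. Then in the ring of formal power series ℚ[[t]] one has exp(−Σ_{i≥1} N_i·t^i/i) = Σ_{w≥0} π_w(N)·t^w; that is, for every w ≥ 0 the coefficient of t^w in exp(−Σ_{i≥1} N_i·t^i/i) equals π_w(N). -/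
open scoped Classical

/-- Generalized binomial coefficient `C(a, k) = a(a-1)⋯(a-k+1)/k!` for `a : ℚ`. -/
def genChoose (a : ℚ) (k : ℕ) : ℚ :=
  (∏ j ∈ Finset.range k, (a - (j : ℚ))) / (Nat.factorial k : ℚ)

/-- `a N i = (1/i) Σ_{d ∣ i} μ(i/d) N d`, the Möbius convolution divided by `i`. -/
noncomputable def moebiusConv (N : ℕ → ℚ) (i : ℕ) : ℚ :=
  (1 / (i : ℚ)) * ∑ d ∈ i.divisors, ((ArithmeticFunction.moebius (i / d) : ℤ) : ℚ) * N d

/-- `π_w(N) = Σ_{|λ| = w} (−1)^{ℓ(λ)} Π_{i ≥ 1} C(a_i, λ_i)`, the sum over all partitions `λ`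
of weight `w`, where `λ_i` is the number of parts of `λ` equal to `i` and
`a_i = (1/i) Σ_{d ∣ i} μ(i/d) N d`. -/
noncomputable def piW (N : ℕ → ℚ) (w : ℕ) : ℚ :=
  ∑ p : Nat.Partition w, (-1 : ℚ) ^ (Multiset.card p.parts) *
    ∏ i ∈ p.parts.toFinset, genChoose (moebiusConv N i) (p.parts.count i)

/-- The formal power series `−Σ_{i ≥ 1} N_i t^i / i` over `ℚ`. -/
noncomputable def negLogZeta (N : ℕ → ℚ) : PowerSeries ℚ :=
  PowerSeries.mk fun i => if i = 0 then 0 else -(N i) / (i : ℚ)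

/-- The formal exponential `exp(f) = Σ_{n ≥ 0} f^n / n!` of a power series `f` with zero
constant term: its coefficient of `t^w` is `Σ_{n ≤ w} (coeff of t^w in f^n)/n!`
(for a series with zero constant coefficient, the terms with `n > w` vanish). -/
noncomputable def expPS (f : PowerSeries ℚ) : PowerSeries ℚ :=
  PowerSeries.mk fun w =>
    ∑ n ∈ Finset.range (w + 1), (PowerSeries.coeff w (f ^ n)) / (Nat.factorial n : ℚ)

/-!
Möbius inversion of `N_j = ∑_{d ∣ j} d a_d` turns `-∑ N_j t^j / j` into `∑_d a_d log (1 - t^d)`,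
and modulo `t^(w+1)` only the terms `d ≤ w` matter. Since `exp` turns sums into products, the
exponential becomes `∏_{d ≤ w} (1 - t^d)^{a_d}`, where `exp (a log (1 - X)) = ∑_k (-1)^k C(a,k) X^k`
because both sides solve `(1 - X) y' = -a y` with `y(0) = 1`. Expanding the product, the
coefficient of `t^w` collects one term `∏_i (-1)^{λ_i} C(a_i, λ_i)` for each partition `λ` of `w`
(the partition generating function `Nat.Partition.genFun`).
-/

open PowerSeries Finset
open scoped PowerSeries.WithPiTopology

theorem coeff_pow_eq_zero_of_lt {R : Type*} [CommSemiring R] {f : R⟦X⟧} (hf : constantCoeff f = 0)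
    {j n : ℕ} (h : j < n) : coeff j (f ^ n) = 0 :=
  X_pow_dvd_iff.mp (pow_dvd_pow_of_dvd (X_dvd_iff.mpr hf) n) j h

theorem eq_of_derivative_eq_mul {K : Type*} [Field K] [CharZero K] {u v g : K⟦X⟧}
    (hu : d⁄dX K u = g * u) (hv : d⁄dX K v = g * v) (h0 : constantCoeff u = constantCoeff v) :
    u = v := by
  ext n
  induction n using Nat.strong_induction_on with
  | _ n ih =>
    cases n with
    | zero => simpa using h0
    | succ n =>
      have hderiv : coeff n (d⁄dX K u) = coeff n (d⁄dX K v) := by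
        rw [hu, hv, coeff_mul, coeff_mul]
        exact sum_congr rfl fun p hp => by
          rw [ih p.2 (by have := mem_antidiagonal.mp hp; omega)]
      rw [coeff_derivative, coeff_derivative] at hderiv
      exact mul_right_cancel₀ (Nat.cast_add_one_ne_zero n) hderiv

section Exp

variable {f g : ℚ⟦X⟧}

theorem expPS_eq_subst_exp (hf : constantCoeff f = 0) : expPS f = (exp ℚ).subst f := by
  ext w
  rw [expPS, coeff_mk, coeff_subst' (HasSubst.of_constantCoeff_zero' hf),
    finsum_eq_sum_of_support_subset _ (s := range (w + 1))]
  · refine sum_congr rfl fun n _ => ?_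
    rw [coeff_exp, smul_eq_mul, Algebra.algebraMap_self_apply]
    ring
  · intro n hn
    rw [Function.mem_support] at hn
    rw [coe_range, Set.mem_Iio]
    by_contra h
    exact hn (by rw [coeff_pow_eq_zero_of_lt hf (by omega), smul_zero])

theorem constantCoeff_expPS (f : ℚ⟦X⟧) : constantCoeff (expPS f) = 1 := by
  rw [← coeff_zero_eq_constantCoeff_apply, expPS, coeff_mk]
  simp

theorem derivative_expPS (hf : constantCoeff f = 0) :
    d⁄dX ℚ (expPS f) = d⁄dX ℚ f * expPS f := by
  rw [expPS_eq_subst_exp hf, derivative_subst (HasSubst.of_constantCoeff_zero' hf),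
    derivative_exp, mul_comm]

theorem expPS_expand (hf : constantCoeff f = 0) {d : ℕ} (hd : d ≠ 0) :
    expPS (expand d hd f) = expand d hd (expPS f) := by
  rw [expPS_eq_subst_exp hf, expPS_eq_subst_exp (by rwa [constantCoeff_expand])]
  exact (expand_subst d hd (HasSubst.of_constantCoeff_zero' hf) (exp ℚ)).symm

theorem expPS_add (hf : constantCoeff f = 0) (hg : constantCoeff g = 0) :
    expPS (f + g) = expPS f * expPS g := by
  refine eq_of_derivative_eq_mul (derivative_expPS (by simp [hf, hg])) ?_ (by
    simp [constantCoeff_expPS])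
  rw [Derivation.leibniz, derivative_expPS hf, derivative_expPS hg, map_add, smul_eq_mul,
    smul_eq_mul]
  ring

theorem expPS_zero : expPS 0 = 1 := by
  ext w
  simp [expPS, coeff_one, zero_pow_eq, apply_ite, ite_div]

theorem expPS_sum {ι : Type*} (s : Finset ι) (f : ι → ℚ⟦X⟧)
    (hf : ∀ i ∈ s, constantCoeff (f i) = 0) :
    expPS (∑ i ∈ s, f i) = ∏ i ∈ s, expPS (f i) := by
  induction s using Finset.induction_on with
  | empty => exact expPS_zero
  | insert a s ha ih =>
    rw [sum_insert ha, prod_insert ha, expPS_add (hf a (mem_insert_self a s))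
      (by rw [map_sum]; exact sum_eq_zero fun i hi => hf i (mem_insert_of_mem hi)),
      ih fun i hi => hf i (mem_insert_of_mem hi)]

theorem coeff_expPS_congr {w : ℕ} (h : ∀ j ≤ w, coeff j f = coeff j g) :
    coeff w (expPS f) = coeff w (expPS g) := by
  have htrunc : trunc (w + 1) f = trunc (w + 1) g := by
    ext j
    simp only [coeff_trunc]
    split_ifs with hj
    · exact h j (by omega)
    · rfl
  simp only [expPS, coeff_mk]
  refine sum_congr rfl fun n _ => ?_
  rw [← coeff_coe_trunc_of_lt (lt_add_one w), ← trunc_trunc_pow, htrunc, trunc_trunc_pow,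
    coeff_coe_trunc_of_lt (lt_add_one w)]

end Exp

theorem coeff_one_sub_X_mul_succ {R : Type*} [CommRing R] (h : R⟦X⟧) (n : ℕ) :
    coeff (n + 1) ((1 - X) * h) = coeff (n + 1) h - coeff n h := by
  rw [sub_mul, one_mul, map_sub, coeff_succ_X_mul]

/-- `log (1 - X) = -∑_{n ≥ 1} X^n / n`: the constant coefficient is `-(0 : ℚ)⁻¹ = 0`. -/
noncomputable def logOneSubX : ℚ⟦X⟧ := mk fun n => -(n : ℚ)⁻¹

theorem constantCoeff_logOneSubX : constantCoeff logOneSubX = 0 := by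
  rw [← coeff_zero_eq_constantCoeff_apply, logOneSubX, coeff_mk]
  simp

theorem one_sub_X_mul_derivative_logOneSubX : (1 - X) * d⁄dX ℚ logOneSubX = -1 := by
  have hcoeff (n : ℕ) : coeff n (d⁄dX ℚ logOneSubX) = -1 := by
    rw [coeff_derivative, logOneSubX, coeff_mk]
    field_simp
    push_cast
    ring
  ext n
  cases n with
  | zero => rw [sub_mul, one_mul, map_sub, coeff_zero_X_mul, sub_zero, hcoeff, map_neg, coeff_one,
      if_pos rfl]
  | succ n => simp [coeff_one_sub_X_mul_succ, hcoeff]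

noncomputable def oneSubXPow (a : ℚ) : ℚ⟦X⟧ := mk fun k => (-1) ^ k * genChoose a k

theorem succ_mul_genChoose_succ (a : ℚ) (k : ℕ) :
    (k + 1) * genChoose a (k + 1) = (a - k) * genChoose a k := by
  rw [genChoose, genChoose, prod_range_succ, Nat.factorial_succ, Nat.cast_mul]
  field_simp
  push_cast
  ring

theorem one_sub_X_mul_derivative_oneSubXPow (a : ℚ) :
    (1 - X) * d⁄dX ℚ (oneSubXPow a) = -C a * oneSubXPow a := by
  ext n
  cases n with
  | zero =>
    rw [sub_mul, one_mul, map_sub, coeff_zero_X_mul, sub_zero, coeff_derivative, neg_mul, map_neg,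
      coeff_C_mul, oneSubXPow, coeff_mk, coeff_mk]
    simp [genChoose]
  | succ n =>
    have hrec := succ_mul_genChoose_succ a (n + 1)
    rw [coeff_one_sub_X_mul_succ, coeff_derivative, coeff_derivative, neg_mul, map_neg,
      coeff_C_mul, oneSubXPow]
    simp only [coeff_mk]
    push_cast at hrec ⊢
    linear_combination (-1) ^ n * hrec

theorem expPS_C_mul_logOneSubX (a : ℚ) : expPS (C a * logOneSubX) = oneSubXPow a := by
  have hconst : constantCoeff (C a * logOneSubX) = 0 := by
    rw [map_mul, constantCoeff_logOneSubX, mul_zero]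
  refine eq_of_derivative_eq_mul (derivative_expPS hconst) ?_ ?_
  · have hne : (1 - X : ℚ⟦X⟧) ≠ 0 := fun h => by simpa using congrArg constantCoeff h
    refine mul_left_cancel₀ hne ?_
    rw [one_sub_X_mul_derivative_oneSubXPow, Derivation.leibniz, derivative_C, smul_zero,
      add_zero, smul_eq_mul]
    linear_combination -(C a * oneSubXPow a) * one_sub_X_mul_derivative_logOneSubX
  · rw [constantCoeff_expPS, oneSubXPow, ← coeff_zero_eq_constantCoeff_apply, coeff_mk]
    simp [genChoose]

theorem expPS_C_mul_expand_logOneSubX (a : ℚ) {d : ℕ} (hd : d ≠ 0) :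
    expPS (C a * expand d hd logOneSubX) = expand d hd (oneSubXPow a) := by
  rw [← expand_C d hd, ← map_mul, expPS_expand (by simp [constantCoeff_logOneSubX]),
    expPS_C_mul_logOneSubX]

theorem sum_divisors_mul_moebiusConv (N : ℕ → ℚ) {j : ℕ} (hj : 0 < j) :
    ∑ d ∈ j.divisors, (d : ℚ) * moebiusConv N d = N j := by
  refine (ArithmeticFunction.sum_eq_iff_sum_mul_moebius_eq
    (f := fun i => (i : ℚ) * moebiusConv N i) (g := N)).mpr (fun n hn => ?_) j hj
  rw [moebiusConv, ← mul_assoc, mul_one_div_cancel (Nat.cast_ne_zero.mpr hn.ne'), one_mul,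
    Nat.sum_divisorsAntidiagonal' (fun x y => ((ArithmeticFunction.moebius x : ℤ) : ℚ) * N y)]

theorem coeff_expand_logOneSubX {d : ℕ} (hd : d ≠ 0) (j : ℕ) :
    coeff j (expand d hd logOneSubX) = if d ∣ j then -((j / d : ℕ) : ℚ)⁻¹ else 0 := by
  rw [coeff_expand, logOneSubX, coeff_mk]

theorem coeff_negLogZeta_eq_coeff_sum_expand (N : ℕ → ℚ) {w j : ℕ} (hj : j ≤ w) :
    coeff j (negLogZeta N) = coeff j (∑ i ∈ range w,
      C (moebiusConv N (i + 1)) * expand (i + 1) i.succ_ne_zero logOneSubX) := by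
  set F : ℕ → ℚ := fun d => moebiusConv N d * if d ∣ j then -((j / d : ℕ) : ℚ)⁻¹ else 0
  have hsum : coeff j (∑ i ∈ range w,
      C (moebiusConv N (i + 1)) * expand (i + 1) i.succ_ne_zero logOneSubX) =
      ∑ d ∈ range (w + 1), F d := by
    rw [map_sum, sum_range_succ']
    simp [F, coeff_C_mul, coeff_expand_logOneSubX]
  rw [hsum, negLogZeta, coeff_mk]
  rcases Nat.eq_zero_or_pos j with rfl | hj0
  · simp [F]
  have hdiv : j.divisors ⊆ range (w + 1) := fun d hd =>
    mem_range.mpr (by have := Nat.divisor_le hd; omega)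
  rw [if_neg hj0.ne', ← sum_subset hdiv fun d _ hd => by
    simp only [F, if_neg fun h => hd (Nat.mem_divisors.mpr ⟨h, hj0.ne'⟩), mul_zero]]
  have hterm : ∀ d ∈ j.divisors, F d = -((d : ℚ) * moebiusConv N d) / j := by
    intro d hd
    have hdj := Nat.dvd_of_mem_divisors hd
    have hd0 : (d : ℚ) ≠ 0 := Nat.cast_ne_zero.mpr (Nat.pos_of_mem_divisors hd).ne'
    simp only [F, if_pos hdj, Nat.cast_div_charZero hdj]
    field_simp
  rw [sum_congr rfl hterm, ← sum_div, sum_neg_distrib, sum_divisors_mul_moebiusConv N hj0,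
    neg_div]

section PiTopology

variable {R : Type*} [CommRing R] [TopologicalSpace R] [T2Space R]

theorem one_add_tsum_eq_expand_mk (g : ℕ → R) (hg : g 0 = 1) {d : ℕ} (hd : d ≠ 0) :
    1 + ∑' j, g (j + 1) • (X : R⟦X⟧) ^ (d * (j + 1)) = expand d hd (mk g) := by
  suffices HasSum (fun j => g (j + 1) • (X : R⟦X⟧) ^ (d * (j + 1))) (expand d hd (mk g) - 1) by
    rw [this.tsum_eq, add_sub_cancel]
  rw [WithPiTopology.hasSum_iff_hasSum_coeff]
  intro n
  simp only [coeff_smul, coeff_X_pow, smul_eq_mul, mul_ite, mul_one, mul_zero, map_sub,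
    coeff_expand, coeff_mk, coeff_one]
  by_cases hn : ∃ k, n = d * (k + 1)
  · obtain ⟨k, rfl⟩ := hn
    rw [if_pos (dvd_mul_right d _), if_neg (by positivity), Nat.mul_div_cancel_left _ (by omega),
      sub_zero]
    convert hasSum_ite_eq k (g (k + 1)) using 2 with j
    simp only [mul_right_inj' hd, Nat.add_right_cancel_iff, eq_comm]
    split_ifs with h <;> simp [h]
  · push Not at hn
    simp only [hn, if_false]
    rcases Nat.eq_zero_or_pos n with rfl | hn0
    · simp [hg]
    · have hdn : ¬ d ∣ n := by
        rintro ⟨m, rfl⟩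
        have hm : 0 < m := Nat.pos_of_ne_zero (by rintro rfl; simp at hn0)
        exact hn (m - 1) (by rw [Nat.sub_add_cancel hm])
      simp [hdn, hn0.ne']

theorem coeff_eq_coeff_prod_of_hasProd {ι : Type*} {F : ι → R⟦X⟧} {G : R⟦X⟧} (hF : HasProd F G)
    (s : Finset ι) {w : ℕ} (hs : ∀ i ∉ s, X ^ (w + 1) ∣ F i - 1) :
    coeff w G = coeff w (∏ i ∈ s, F i) := by
  have hstable : ∀ t ⊇ s, coeff w (∏ i ∈ t, F i) = coeff w (∏ i ∈ s, F i) := by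
    intro t hst
    obtain ⟨q, hq⟩ : X ^ (w + 1) ∣ ∏ i ∈ t \ s, F i - 1 := by
      refine prod_induction F (fun x => X ^ (w + 1) ∣ x - 1) (fun x y hx hy => ?_) (by simp)
        fun i hi => hs i (mem_sdiff.mp hi).2
      rw [show x * y - 1 = x * (y - 1) + (x - 1) by ring]
      exact (dvd_mul_of_dvd_right hy x).add hx
    rw [← prod_sdiff hst, eq_add_of_sub_eq hq, add_mul, one_mul, map_add, mul_assoc,
      coeff_X_pow_mul', if_neg (by omega), zero_add]
  refine tendsto_nhds_unique (((WithPiTopology.continuous_coeff R w).tendsto G).comp hF) ?_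
  exact tendsto_const_nhds.congr'
    (Filter.eventually_atTop.mpr ⟨s, fun t ht => (hstable t ht).symm⟩)

end PiTopology

theorem X_pow_dvd_expand_sub_C {R : Type*} [CommRing R] {d w : ℕ} (hd : d ≠ 0) (hw : w < d)
    (f : R⟦X⟧) :
    X ^ (w + 1) ∣ expand d hd f - C (constantCoeff f) := by
  refine X_pow_dvd_iff.mpr fun m hm => ?_
  rw [map_sub, coeff_expand, coeff_C]
  rcases Nat.eq_zero_or_pos m with rfl | hm0
  · simp
  · rw [if_neg fun h => hm0.ne' (Nat.eq_zero_of_dvd_of_lt h (by omega)), if_neg hm0.ne',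
      sub_zero]

theorem coeff_prod_expand_oneSubXPow (b : ℕ → ℚ) (w : ℕ) :
    coeff w (∏ i ∈ range w, expand (i + 1) i.succ_ne_zero (oneSubXPow (b (i + 1)))) =
      ∑ p : w.Partition, (-1 : ℚ) ^ Multiset.card p.parts *
        ∏ i ∈ p.parts.toFinset, genChoose (b i) (p.parts.count i) := by
  set f : ℕ → ℕ → ℚ := fun i c => (-1) ^ c * genChoose (b i) c
  have hfactor (i : ℕ) : 1 + ∑' j, f (i + 1) (j + 1) • (X : ℚ⟦X⟧) ^ ((i + 1) * (j + 1)) =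
      expand (i + 1) i.succ_ne_zero (oneSubXPow (b (i + 1))) :=
    one_add_tsum_eq_expand_mk (f (i + 1)) (by simp [f, genChoose]) _
  have hprod := Nat.Partition.hasProd_genFun f
  simp only [hfactor] at hprod
  rw [← coeff_eq_coeff_prod_of_hasProd hprod _ fun i hi => ?_, Nat.Partition.coeff_genFun]
  · refine sum_congr rfl fun p _ => ?_
    simp only [Finsupp.prod, Multiset.toFinsupp_support, Multiset.toFinsupp_apply, f,
      prod_mul_distrib, prod_pow_eq_pow_sum, Multiset.toFinset_sum_count_eq]
  · have := X_pow_dvd_expand_sub_C i.succ_ne_zero (by simpa using hi) (oneSubXPow (b (i + 1)))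
    simpa [oneSubXPow, ← coeff_zero_eq_constantCoeff_apply, genChoose] using this

/-- For any sequence `N : {1,2,…} → ℚ`, in `ℚ[[t]]` one has
`exp(−Σ_{i≥1} N_i t^i/i) = Σ_{w≥0} π_w(N) t^w`; that is, for every `w ≥ 0` the coefficient of
`t^w` in `exp(−Σ_{i≥1} N_i t^i/i)` equals `π_w(N)`. -/
theorem inverse_zeta_generates_pi (N : ℕ → ℚ) :
    expPS (negLogZeta N) = PowerSeries.mk (piW N) ∧
      ∀ w : ℕ, PowerSeries.coeff w (expPS (negLogZeta N)) = piW N w := by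
  have hcoeff (w : ℕ) : coeff w (expPS (negLogZeta N)) = piW N w := by
    have hconst : ∀ i ∈ range w,
        constantCoeff (C (moebiusConv N (i + 1)) * expand (i + 1) i.succ_ne_zero logOneSubX) = 0 :=
      fun i _ => by simp [constantCoeff_logOneSubX]
    rw [coeff_expPS_congr fun j hj => coeff_negLogZeta_eq_coeff_sum_expand N hj,
      expPS_sum _ _ hconst, prod_congr rfl fun i _ => expPS_C_mul_expand_logOneSubX _ _,
      coeff_prod_expand_oneSubXPow, piW]
  exact ⟨ext fun w => by rw [hcoeff, coeff_mk], hcoeff⟩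
end

section
/- Let n ≥ 0 and let q be a positive integer, and set N_r := 1 + q^r + q^{2r} + … + q^{nr} for r ≥ 1. With a_i := (1/i)·Σ_{d ∣ i} μ(i/d)·N_d and π_w := Σ_{λ : |λ| = w} (−1)^{ℓ(λ)} · Π_{i≥1} C(a_i, λ_i) (sum over all partitions λ of weight w), one has Σ_{w=0}^{n+1} π_w = 0. -/
/-!
By Möbius inversion `Σ_{i ∣ r} i aᵢ = N_r`, so the logarithmic derivative of
`F = ∏_{i ≤ n+1} (1 - Xⁱ)^{aᵢ}` agrees up to degree `n` with that of
`P = ∏_{j ≤ n} (1 - qʲ X)`: both begin `-Σ_r N_r X^{r-1}`. A power series with constant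
term `1` is determined up to degree `n + 1` by its logarithmic derivative up to degree `n`,
so `F` and `P` agree up to degree `n + 1`. Expanding the product `F` over partitions, its
coefficient of `X^w` is `π_w`. Hence `Σ_{w ≤ n+1} π_w` is the sum of all coefficients of the
polynomial `P` of degree `n + 1`, which is `P(1) = 0` because of the factor `1 - X`.
-/

open scoped Classical

open Finset PowerSeries

theorem genChoose_eq_choose (a : ℚ) (k : ℕ) : genChoose a k = Ring.choose a k := by
  rw [genChoose, Ring.choose_eq_smul, ← Polynomial.aeval_eq_smeval,
    ← Polynomial.eval_map_algebraMap, descPochhammer_map, descPochhammer_eval_eq_prod_range,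
    smul_eq_mul, inv_mul_eq_div]

theorem Ring.choose_neg_one {R : Type*} [CommRing R] [BinomialRing R] (k : ℕ) :
    Ring.choose (-1 : R) k = (-1) ^ k := by
  rw [Ring.choose_neg, add_sub_cancel_left, Ring.choose_natCast, Nat.choose_self, Nat.cast_one,
    Units.smul_def, zsmul_eq_mul, Int.cast_negOnePow_natCast, mul_one]

theorem Derivation.map_prod_of_eq_mul {R A ι : Type*} [CommSemiring R] [CommSemiring A]
    [Algebra R A] (D : Derivation R A A) (s : Finset ι) {f g : ι → A}
    (h : ∀ i ∈ s, D (f i) = g i * f i) :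
    D (∏ i ∈ s, f i) = (∑ i ∈ s, g i) * ∏ i ∈ s, f i := by
  induction s using Finset.cons_induction with
  | empty => simp
  | cons j s hj ih =>
    rw [prod_cons, sum_cons, D.leibniz, h j (mem_cons_self j s),
      ih fun i hi => h i (mem_cons_of_mem hi), smul_eq_mul, smul_eq_mul]
    ring

theorem Nat.Partition.exists_toFinsuppAntidiag_eq {s : Finset ℕ} {w : ℕ} {g : ℕ →₀ ℕ}
    (hg : g ∈ s.finsuppAntidiag w) (hdvd : ∀ i ∈ s, i ∣ g i) :
    ∃ p : w.Partition, p.toFinsuppAntidiag = g := by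
  obtain ⟨hsum, hsupp⟩ := mem_finsuppAntidiag.mp hg
  have hcount (j : ℕ) : (∑ i ∈ s, (g i / i) • {i} : Multiset ℕ).count j =
      if j ∈ s then g j / j else 0 := by
    simp [Multiset.count_sum', Multiset.count_singleton]
  refine ⟨⟨∑ i ∈ s, (g i / i) • {i}, fun {j} hj => ?_, ?_⟩, ?_⟩
  · refine Nat.pos_of_ne_zero fun hj0 => ?_
    subst hj0
    simp [← Multiset.count_pos, hcount] at hj
  · change Multiset.sumAddMonoidHom _ = w
    rw [map_sum, ← hsum]
    refine sum_congr rfl fun i hi => ?_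
    rw [Multiset.coe_sumAddMonoidHom, Multiset.sum_nsmul, Multiset.sum_singleton, smul_eq_mul,
      Nat.div_mul_cancel (hdvd i hi)]
  · ext j
    show Multiset.count j _ * j = g j
    rw [hcount]
    split_ifs with hj
    · exact Nat.div_mul_cancel (hdvd j hj)
    · exact (zero_mul j).trans (Finsupp.notMem_support_iff.mp fun h => hj (hsupp h)).symm

namespace PowerSeries

theorem coeff_eq_of_derivative_eq_mul {R : Type*} [CommRing R] [IsAddTorsionFree R]
    {f g S T : R⟦X⟧} {L : ℕ} (h0 : constantCoeff f = constantCoeff g)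
    (hf : d⁄dX R f = S * f) (hg : d⁄dX R g = T * g) (hST : ∀ k < L, coeff k S = coeff k T) :
    ∀ m ≤ L, coeff m f = coeff m g := by
  intro m
  induction m using Nat.strong_induction_on with
  | _ m ih =>
    intro hm
    rcases m with _ | m
    · simpa using h0
    · have key : coeff m (S * f) = coeff m (T * g) := by
        rw [coeff_mul, coeff_mul]
        refine sum_congr rfl fun p hp => ?_
        have hsum := mem_antidiagonal.mp hp
        rw [hST _ (by omega), ih _ (by omega) (by omega)]
      rw [← hf, ← hg, coeff_derivative, coeff_derivative] at key
      apply nsmul_right_injective m.succ_ne_zero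
      simpa [nsmul_eq_mul, mul_comm] using key

theorem sum_coeff_prod_one_sub_C_mul_X {R ι : Type*} [CommRing R] (s : Finset ι) (c : ι → R) :
    ∑ w ∈ range (#s + 1), coeff w (∏ j ∈ s, (1 - C (c j) * X)) = ∏ j ∈ s, (1 - c j) := by
  set p : Polynomial R := ∏ j ∈ s, (1 - Polynomial.C (c j) * Polynomial.X)
  have hp : (p : R⟦X⟧) = ∏ j ∈ s, (1 - C (c j) * X) := by
    rw [← Polynomial.coeToPowerSeries.ringHom_apply, map_prod]
    simp
  have hdeg : p.natDegree < #s + 1 := by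
    refine Nat.lt_succ_of_le ((Polynomial.natDegree_prod_le _ _).trans
      ((sum_le_card_nsmul s _ 1 fun j _ => ?_).trans_eq (smul_eq_mul _ _ |>.trans (mul_one _))))
    compute_degree
  rw [← hp]
  simpa [p, Polynomial.eval_prod] using (Polynomial.eval_eq_sum_range' hdeg 1).symm

theorem coeff_prod_eq_sum_partition {R : Type*} [CommSemiring R] {s : Finset ℕ}
    {F : ℕ → R⟦X⟧} {w : ℕ} (hs : Icc 1 w ⊆ s) (h0 : ∀ i ∈ s, constantCoeff (F i) = 1)
    (hdvd : ∀ i ∈ s, ∀ m, ¬ i ∣ m → coeff m (F i) = 0) :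
    coeff w (∏ i ∈ s, F i) =
      ∑ p : w.Partition, ∏ i ∈ p.parts.toFinset, coeff (p.parts.count i * i) (F i) := by
  rw [coeff_prod]
  symm
  refine sum_of_injOn Nat.Partition.toFinsuppAntidiag
    (Nat.Partition.toFinsuppAntidiag_injective w).injOn
    (fun p _ => finsuppAntidiag_mono hs w p.toFinsuppAntidiag_mem_finsuppAntidiag)
    (fun g hg hne => ?_) (fun p _ => ?_)
  · by_contra hprod
    obtain ⟨p, rfl⟩ := Nat.Partition.exists_toFinsuppAntidiag_eq hg fun i hi => by
      by_contra hi'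
      exact hprod (prod_eq_zero hi (hdvd i hi _ hi'))
    exact hne ⟨p, mem_univ p, rfl⟩
  · have hsub : p.parts.toFinset ⊆ s := fun i hi => hs <| by
      rw [Multiset.mem_toFinset] at hi
      exact mem_Icc.mpr ⟨p.parts_pos hi, Nat.Partition.le_of_mem_parts hi⟩
    refine prod_subset hsub fun i hi hi' => ?_
    rw [Multiset.count_eq_zero.mpr (mt Multiset.mem_toFinset.mpr hi'), zero_mul,
      coeff_zero_eq_constantCoeff_apply, h0 i hi]

variable {R : Type*} [CommRing R] [BinomialRing R]

theorem derivative_binomialSeries (r : R) :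
    d⁄dX R (binomialSeries R r) = r • binomialSeries R (r - 1) := by
  ext n
  have h := Ring.choose_smul_choose r (Nat.le_add_left 1 n)
  rw [Nat.choose_one_right, Ring.choose_one_right, Nat.cast_one, Nat.add_sub_cancel] at h
  rw [coeff_derivative, coeff_smul, binomialSeries_coeff, binomialSeries_coeff, smul_smul, ← h,
    nsmul_eq_mul]
  simp only [smul_eq_mul, mul_one]
  push_cast
  ring

theorem derivative_subst_binomialSeries {g : R⟦X⟧} (hg : HasSubst g) (r : R) :
    d⁄dX R ((binomialSeries R r).subst g) =
      r • ((binomialSeries R (-1 : R)).subst g * d⁄dX R g) * (binomialSeries R r).subst g := by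
  rw [derivative_subst hg, derivative_binomialSeries, sub_eq_neg_add, binomialSeries_add,
    subst_smul hg, subst_mul hg, smul_mul_assoc, smul_mul_assoc, mul_right_comm]

/-- The power series `(1 - c Xⁱ) ^ a`. -/
noncomputable def oneSubXPowPow (c : R) (i : ℕ) (a : R) : R⟦X⟧ :=
  (binomialSeries R a).subst ((-c) • X ^ i : R⟦X⟧)

variable {i : ℕ}

theorem oneSubXPowPow_eq_subst_rescale (hi : i ≠ 0) (c a : R) :
    oneSubXPowPow c i a = (rescale (-c) (binomialSeries R a)).subst (X ^ i : R⟦X⟧) := by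
  rw [rescale_eq_subst, subst_comp_subst_apply (HasSubst.smul_X' _) (HasSubst.X_pow hi),
    subst_smul (HasSubst.X_pow hi), subst_X (HasSubst.X_pow hi), oneSubXPowPow]

theorem coeff_oneSubXPowPow (hi : i ≠ 0) (c a : R) (m : ℕ) :
    coeff m (oneSubXPowPow c i a) =
      if i ∣ m then (-c) ^ (m / i) * Ring.choose a (m / i) else 0 := by
  simp [oneSubXPowPow_eq_subst_rescale hi, coeff_subst_X_pow hi, coeff_rescale]

theorem constantCoeff_oneSubXPowPow (hi : i ≠ 0) (c a : R) :
    constantCoeff (oneSubXPowPow c i a) = 1 := by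
  rw [← coeff_zero_eq_constantCoeff_apply, coeff_oneSubXPowPow hi, if_pos (dvd_zero i),
    Nat.zero_div, pow_zero, Ring.choose_zero_right, mul_one]

theorem oneSubXPowPow_one (hi : i ≠ 0) (c : R) : oneSubXPowPow c i 1 = 1 - C c * X ^ i := by
  have hg : HasSubst ((-c) • X ^ i : R⟦X⟧) := (HasSubst.X_pow hi).smul' (-c)
  have h := binomialSeries_nat (A := R) (R := R) 1
  rw [Nat.cast_one, pow_one] at h
  rw [oneSubXPowPow, h, ← coe_substAlgHom hg, map_add, map_one, coe_substAlgHom, subst_X hg,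
    smul_eq_C_mul, map_neg, neg_mul, sub_eq_add_neg]

theorem derivative_oneSubXPowPow (hi : i ≠ 0) (c a : R) :
    d⁄dX R (oneSubXPowPow c i a) =
      a • (oneSubXPowPow c i (-1) * d⁄dX R ((-c) • X ^ i)) * oneSubXPowPow c i a :=
  derivative_subst_binomialSeries ((HasSubst.X_pow hi).smul' (-c)) a

theorem coeff_oneSubXPowPow_neg_one_mul_derivative (hi : i ≠ 0) (c : R) (n : ℕ) :
    coeff n (oneSubXPowPow c i (-1) * d⁄dX R ((-c) • X ^ i)) =
      if i ∣ n + 1 then -(i * c ^ ((n + 1) / i)) else 0 := by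
  obtain ⟨j, rfl⟩ := Nat.exists_eq_add_one_of_ne_zero hi
  have h : oneSubXPowPow c (j + 1) (-1) * d⁄dX R ((-c) • X ^ (j + 1)) =
      C (-(c * (j + 1))) * (oneSubXPowPow c (j + 1) (-1) * X ^ j) := by
    rw [Derivation.map_smul, derivative_pow, derivative_X, smul_eq_C_mul]
    simp only [map_neg, map_mul, map_add, map_natCast, map_one, Nat.add_sub_cancel,
      Nat.cast_add, Nat.cast_one]
    ring
  rw [h, coeff_C_mul, coeff_mul_X_pow']
  by_cases hjn : j ≤ n
  · obtain ⟨m, rfl⟩ := Nat.exists_eq_add_of_le hjn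
    rw [if_pos hjn, Nat.add_sub_cancel_left, coeff_oneSubXPowPow hi, add_right_comm]
    simp only [Nat.dvd_add_self_left, Nat.add_div_left _ j.succ_pos]
    split_ifs
    · rw [Ring.choose_neg_one, pow_succ, ← mul_pow, neg_mul_neg, mul_one]
      push_cast
      ring
    · rw [mul_zero]
  · rw [if_neg hjn, if_neg (Nat.not_dvd_of_pos_of_lt n.succ_pos (by omega)), mul_zero]

theorem derivative_prod_oneSubXPowPow {ι : Type*} (s : Finset ι) (c : ι → R) (i : ι → ℕ)
    (a : ι → R) (hi : ∀ k ∈ s, i k ≠ 0) :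
    d⁄dX R (∏ k ∈ s, oneSubXPowPow (c k) (i k) (a k)) =
      (mk fun n => -∑ k ∈ s, if i k ∣ n + 1 then i k * a k * c k ^ ((n + 1) / i k) else 0) *
        ∏ k ∈ s, oneSubXPowPow (c k) (i k) (a k) := by
  rw [Derivation.map_prod_of_eq_mul _ s fun k hk => derivative_oneSubXPowPow (hi k hk) (c k) (a k)]
  congr 1
  ext n
  rw [map_sum, coeff_mk, ← sum_neg_distrib]
  refine sum_congr rfl fun k hk => ?_
  rw [coeff_smul, coeff_oneSubXPowPow_neg_one_mul_derivative (hi k hk), smul_eq_mul]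
  split_ifs <;> ring

end PowerSeries

theorem Nat.sum_Icc_ite_dvd {M : Type*} [AddCommMonoid M] {r L : ℕ} (hr : r ≠ 0) (hrL : r ≤ L)
    (f : ℕ → M) : ∑ i ∈ Icc 1 L, (if i ∣ r then f i else 0) = ∑ i ∈ r.divisors, f i := by
  rw [← sum_filter]
  congr 1
  ext i
  simp only [mem_filter, mem_Icc, Nat.mem_divisors, hr, ne_eq, not_false_eq_true, and_true]
  exact ⟨fun h => h.2, fun h => ⟨⟨Nat.pos_of_dvd_of_pos h (Nat.pos_of_ne_zero hr),
    (Nat.le_of_dvd (Nat.pos_of_ne_zero hr) h).trans hrL⟩, h⟩⟩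

theorem sum_divisors_mul_moebiusConv_s5 (N : ℕ → ℚ) {r : ℕ} (hr : 0 < r) :
    ∑ i ∈ r.divisors, (i : ℚ) * moebiusConv N i = N r := by
  refine (ArithmeticFunction.sum_eq_iff_sum_smul_moebius_eq
    (f := fun i => (i : ℚ) * moebiusConv N i)).mpr (fun m hm => ?_) r hr
  rw [Nat.sum_divisorsAntidiagonal' (f := fun a b => ArithmeticFunction.moebius a • N b),
    moebiusConv, ← mul_assoc, mul_one_div_cancel (Nat.cast_ne_zero.mpr hm.ne'), one_mul]
  simp [zsmul_eq_mul]

theorem piW_eq_coeff_prod (N : ℕ → ℚ) {w L : ℕ} (hw : w ≤ L) :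
    piW N w = coeff w (∏ i ∈ Icc 1 L, oneSubXPowPow 1 i (moebiusConv N i)) := by
  have hi : ∀ i ∈ Icc 1 L, i ≠ 0 := fun i hi => Nat.one_le_iff_ne_zero.mp (mem_Icc.mp hi).1
  rw [coeff_prod_eq_sum_partition (Icc_subset_Icc_right hw)
    (fun i hi' => constantCoeff_oneSubXPowPow (hi i hi') 1 _)
    (fun i hi' m hm => by rw [coeff_oneSubXPowPow (hi i hi'), if_neg hm]), piW]
  refine sum_congr rfl fun p _ => ?_
  have hcoeff : ∀ i ∈ p.parts.toFinset, coeff (p.parts.count i * i)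
      (oneSubXPowPow 1 i (moebiusConv N i)) =
        (-1) ^ p.parts.count i * genChoose (moebiusConv N i) (p.parts.count i) := by
    intro i hi'
    have hpos := p.parts_pos (Multiset.mem_toFinset.mp hi')
    rw [coeff_oneSubXPowPow hpos.ne', if_pos (dvd_mul_left i _), Nat.mul_div_cancel _ hpos,
      genChoose_eq_choose]
  rw [prod_congr rfl hcoeff, prod_mul_distrib, prod_pow_eq_pow_sum,
    Multiset.toFinset_sum_count_eq]

theorem coeff_prod_moebiusConv_eq_coeff_prod_one_sub {ι : Type*} (N : ℕ → ℚ) (s : Finset ι)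
    (c : ι → ℚ) {L : ℕ} (hN : ∀ r, 1 ≤ r → r ≤ L → N r = ∑ j ∈ s, c j ^ r) :
    ∀ w ≤ L, coeff w (∏ i ∈ Icc 1 L, oneSubXPowPow 1 i (moebiusConv N i)) =
      coeff w (∏ j ∈ s, (1 - C (c j) * X)) := by
  have hi : ∀ i ∈ Icc 1 L, i ≠ 0 := fun i hi => Nat.one_le_iff_ne_zero.mp (mem_Icc.mp hi).1
  have hP : ∏ j ∈ s, (1 - C (c j) * X) = ∏ j ∈ s, oneSubXPowPow (c j) 1 1 := by
    simp [oneSubXPowPow_one one_ne_zero]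
  rw [hP]
  refine coeff_eq_of_derivative_eq_mul ?_
    (derivative_prod_oneSubXPowPow _ (fun _ => 1) (fun i => i) (moebiusConv N) hi)
    (derivative_prod_oneSubXPowPow s c (fun _ => 1) (fun _ => 1) fun _ _ => one_ne_zero)
    fun k hk => ?_
  · rw [map_prod, map_prod, prod_eq_one fun i hi' => constantCoeff_oneSubXPowPow (hi i hi') _ _,
      prod_eq_one fun _ _ => constantCoeff_oneSubXPowPow one_ne_zero _ _]
  -- both logarithmic derivatives have `k`-th coefficient `-N (k + 1)`
  simp only [coeff_mk, neg_inj, one_pow, mul_one, one_dvd, if_true, Nat.cast_one, one_mul,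
    Nat.div_one]
  rw [Nat.sum_Icc_ite_dvd k.succ_ne_zero hk, sum_divisors_mul_moebiusConv_s5 N k.succ_pos,
    hN _ k.succ_pos hk]

theorem sum_pi_projective_space_general (n : ℕ) (q : ℕ)
    (N : ℕ → ℚ)
    (hN : ∀ r : ℕ, 1 ≤ r → N r = ∑ j ∈ Finset.range (n + 1), (q : ℚ) ^ (j * r)) :
    ∑ w ∈ Finset.range (n + 2), piW N w = 0 := by
  have hcoeff := coeff_prod_moebiusConv_eq_coeff_prod_one_sub (L := n + 1) N (range (n + 1))
    (fun j => (q : ℚ) ^ j) fun r hr _ => by simp only [hN r hr, pow_mul]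
  calc ∑ w ∈ range (n + 2), piW N w
      = ∑ w ∈ range (n + 2), coeff w (∏ j ∈ range (n + 1), (1 - C ((q : ℚ) ^ j) * X)) :=
        sum_congr rfl fun w hw => by
          have hwn : w ≤ n + 1 := Nat.lt_succ_iff.mp (mem_range.mp hw)
          exact (piW_eq_coeff_prod N hwn).trans (hcoeff w hwn)
    _ = ∏ j ∈ range (n + 1), (1 - (q : ℚ) ^ j) := by
        simpa using sum_coeff_prod_one_sub_C_mul_X (range (n + 1)) fun j => (q : ℚ) ^ j
    _ = 0 := prod_eq_zero (mem_range.mpr n.succ_pos) (by simp)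

/-- For `n ≥ 0`, a positive integer `q`, and
`N r = 1 + q^r + q^{2r} + ⋯ + q^{nr}`, one has `Σ_{w=0}^{n+1} π_w = 0`. -/
theorem sum_pi_projective_space (n : ℕ) (q : ℕ) (hq : 1 ≤ q)
    (N : ℕ → ℚ)
    (hN : ∀ r : ℕ, 1 ≤ r → N r = ∑ j ∈ Finset.range (n + 1), (q : ℚ) ^ (j * r)) :
    ∑ w ∈ Finset.range (n + 2), piW N w = 0 :=
  sum_pi_projective_space_general n q N hN
end

section
/- Let q be a positive integer and for i ≥ 1 set ρ_i := (1/i)·Σ_{d ∣ i} μ(i/d)·(q^d + 1); each ρ_i is a nonnegative integer (when q is a prime power, ρ_i is the number of closed points of degree i of ℙ¹ over 𝔽_q). Let η : {1,2,…} → ℕ be finitely supported with weight |η| = Σ_i i·η_i ≤ 3, and let λ := η + ρ (so λ_i = η_i + ρ_i). Then σ_5(λ) := −Σ_{μ ≤ λ, |μ| ≤ 5} (−1)^{ℓ(μ)} Π_{i≥1} binom(λ_i, μ_i) = 0, where the sum is over finitely supported μ with μ_i ≤ λ_i for all i and weight |μ| = Σ_i i·μ_i ≤ 5 (this is a finite sum,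 even though λ is not finitely supported). -/
open scoped Classical

/-- The weight `|μ| = Σ_i i·μ_i` of a finitely supported `μ : ℕ →₀ ℕ`. -/
def fweight (m : ℕ →₀ ℕ) : ℕ := ∑ i ∈ m.support, i * m i

/-- The length `ℓ(μ) = Σ_i μ_i` of a finitely supported `μ : ℕ →₀ ℕ`. -/
def flength (m : ℕ →₀ ℕ) : ℕ := ∑ i ∈ m.support, m i

/-- A finitely supported `μ : ℕ →₀ ℕ` with `μ 0 = 0` and weight `≤ 5` is bounded by this
element, so the sum defining `σ₅` below ranges over all such `μ`. -/
noncomputable def bnd : ℕ →₀ ℕ := ∑ i ∈ Finset.range 6, Finsupp.single i 5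

/-! Since `q ^ d + 1 = q ^ d + 1 ^ d`, `i ρ_i` is a sum of two necklace numbers
`Σ_{d ∣ i} μ(i/d) a^d`. These are nonnegative (the term `a^i` dominates when `a ≥ 2`) and
divisible by `i`: for `i = p^(j+1) m` with `p ∤ m`, only `d` with `p^j ∣ d` contribute, and they pair
up into differences `a^(p^(j+1) c) - a^(p^j c)`, which are divisible by `p^(j+1)` by Fermat's
little theorem and lifting the exponent.

For `σ₅`, the binomials vanish outside `μ ≤ λ`, so `σ₅(λ)` is minus the sum of the coefficients of
`t^0, …, t^5` in `Π_i (1 - t^i)^{λ_i}`. By the cyclotomic identity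
`Π_i (1 - t^i)^{ρ_i} = (1 - t)(1 - q t)` (for `q` a prime power, the Euler product of the zeta
function of `ℙ¹`), this is `(1 - t)(1 - q t) Π_i (1 - t^i)^{η_i}`, a polynomial of degree
`2 + |η| ≤ 5` vanishing at `t = 1`. Only `ρ_1, …, ρ_5` enter; they are polynomials in `q`, and the
vanishing is a polynomial identity in `q` for each of the seven `η` of weight at most `3`. -/

open ArithmeticFunction Finset

def necklaceSum (q n : ℕ) : ℤ := ∑ d ∈ n.divisors, (moebius (n / d) : ℤ) * (q : ℤ) ^ d

lemma necklaceSum_eq_sum_moebius_mul_pow_div (q n : ℕ) :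
    necklaceSum q n = ∑ d ∈ n.divisors, (moebius d : ℤ) * (q : ℤ) ^ (n / d) := by
  rw [necklaceSum, ← Nat.sum_divisorsAntidiagonal' (fun a b => (moebius a : ℤ) * (q : ℤ) ^ b),
    Nat.sum_divisorsAntidiagonal (fun a b => (moebius a : ℤ) * (q : ℤ) ^ b)]

lemma prime_pow_succ_dvd_pow_sub_pow (a : ℤ) {p : ℕ} (hp : p.Prime) (j c : ℕ) :
    (p : ℤ) ^ (j + 1) ∣ a ^ (p ^ (j + 1) * c) - a ^ (p ^ j * c) := by
  have : Fact p.Prime := ⟨hp⟩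
  have fermat : (p : ℤ) ∣ (a ^ c) ^ p - a ^ c := by
    rw [← ZMod.intCast_zmod_eq_zero_iff_dvd]
    push_cast
    rw [ZMod.pow_card, sub_self]
  rw [show p ^ (j + 1) * c = c * p * p ^ j by ring, show p ^ j * c = c * p ^ j by ring,
    pow_mul, pow_mul, pow_mul]
  exact dvd_sub_pow_of_dvd_sub fermat j

lemma necklaceSum_prime_pow_mul (q : ℕ) {p m : ℕ} (hp : p.Prime) (hpm : ¬ p ∣ m) (j : ℕ) :
    necklaceSum q (p ^ (j + 1) * m) = ∑ e ∈ m.divisors,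
      (moebius e : ℤ) * ((q : ℤ) ^ (p ^ (j + 1) * (m / e)) - (q : ℤ) ^ (p ^ j * (m / e))) := by
  have hcop : ∀ {e}, ¬ p ∣ e → ∀ i, (p ^ i).Coprime e := fun h i =>
    ((Nat.Prime.coprime_iff_not_dvd hp).2 h).pow_left i
  rw [necklaceSum_eq_sum_moebius_mul_pow_div, Nat.divisors_mul, Finset.mul_def,
    sum_image (hcop hpm _).mul_injOn_divisors, sum_product, Nat.sum_divisors_prime_pow hp, sum_comm]
  refine sum_congr rfl fun e he => ?_
  have hem : e ∣ m := Nat.dvd_of_mem_divisors he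
  have hpe : ¬ p ∣ e := fun h => hpm (h.trans hem)
  simp only [isMultiplicative_moebius.map_mul_of_coprime (hcop hpe _)]
  rw [sum_range_succ', sum_range_succ', sum_eq_zero fun i _ => by
    rw [moebius_apply_prime_pow hp (by omega), if_neg (by omega)]; simp]
  have hdiv : p ^ (j + 1) * m / (p * e) = p ^ j * (m / e) := by
    rw [Nat.mul_div_mul_comm (dvd_pow_self p j.succ_ne_zero) hem, pow_succ,
      Nat.mul_div_cancel _ hp.pos]
  rw [pow_zero, one_mul, moebius_apply_one, pow_one, moebius_apply_prime hp,
    Nat.mul_div_assoc _ hem, hdiv]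
  ring

lemma prime_pow_dvd_necklaceSum (q : ℕ) {p m : ℕ} (hp : p.Prime) (hpm : ¬ p ∣ m) (k : ℕ) :
    (p : ℤ) ^ k ∣ necklaceSum q (p ^ k * m) := by
  cases k with
  | zero => exact one_dvd _
  | succ j =>
    rw [necklaceSum_prime_pow_mul q hp hpm j]
    refine dvd_sum fun _ _ => dvd_mul_of_dvd_right ?_ _
    exact prime_pow_succ_dvd_pow_sub_pow _ hp j _

lemma dvd_necklaceSum (q n : ℕ) : (n : ℤ) ∣ necklaceSum q n := by
  rcases eq_or_ne n 0 with rfl | hn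
  · simp [necklaceSum]
  refine Int.natCast_dvd.2 <| (Nat.dvd_iff_prime_pow_dvd_dvd _ _).2 fun p k hp hpk => ?_
  have hk : k ≤ n.factorization p := (hp.pow_dvd_iff_le_factorization hn).1 hpk
  have h := prime_pow_dvd_necklaceSum q hp (Nat.not_dvd_ordCompl hp hn) (n.factorization p)
  rw [Nat.ordProj_mul_ordCompl_eq_self] at h
  exact Int.natCast_dvd.1 ((pow_dvd_pow _ hk).trans h)

lemma necklaceSum_nonneg (q n : ℕ) : 0 ≤ necklaceSum q n := by
  rcases eq_or_ne n 0 with rfl | hn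
  · simp [necklaceSum]
  rcases le_or_gt q 1 with hq | hq
  · have hpow : ∀ d ∈ n.divisors, (q : ℤ) ^ d = q := fun d hd => by
      interval_cases q <;> simp [Nat.pos_of_mem_divisors hd |>.ne']
    rw [necklaceSum, sum_congr rfl fun d hd => by rw [hpow d hd], ← sum_mul,
      Nat.sum_div_divisors n (fun d => (moebius d : ℤ)), ← coe_mul_zeta_apply,
      moebius_mul_coe_zeta, one_apply]
    positivity
  · rw [necklaceSum, ← Nat.cons_self_properDivisors hn, sum_cons, Nat.div_self hn.bot_lt,
      moebius_apply_one, one_mul]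
    have hgeom : ∑ d ∈ n.properDivisors, (q : ℤ) ^ d < (q : ℤ) ^ n := by
      exact_mod_cast Nat.geomSum_lt hq fun d hd => (Nat.mem_properDivisors.1 hd).2
    have hterm : ∀ d ∈ n.properDivisors, -(q : ℤ) ^ d ≤ (moebius (n / d) : ℤ) * (q : ℤ) ^ d := by
      intro d _
      have hμ : -1 ≤ (moebius (n / d) : ℤ) := (abs_le.1 abs_moebius_le_one).1
      nlinarith [pow_nonneg (Int.natCast_nonneg q) d]
    have hsum := sum_le_sum hterm
    rw [sum_neg_distrib] at hsum
    linarith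

lemma exists_necklaceSum_eq_mul (q n : ℕ) : ∃ N : ℕ, necklaceSum q n = n * N := by
  rcases eq_or_ne n 0 with rfl | hn
  · exact ⟨0, by simp [necklaceSum]⟩
  obtain ⟨c, hc⟩ := dvd_necklaceSum q n
  have hc0 : 0 ≤ c := nonneg_of_mul_nonneg_right (hc ▸ necklaceSum_nonneg q n) (by positivity)
  exact ⟨c.toNat, by rw [hc, Int.toNat_of_nonneg hc0]⟩

lemma exists_nat_eq_inv_mul_sum_moebius (q i : ℕ) (hi : i ≠ 0) :
    ∃ N : ℕ, (1 / (i : ℚ)) * ∑ d ∈ i.divisors,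
      ((moebius (i / d) : ℤ) : ℚ) * ((q : ℚ) ^ d + 1) = N := by
  obtain ⟨N₁, h₁⟩ := exists_necklaceSum_eq_mul q i
  obtain ⟨N₂, h₂⟩ := exists_necklaceSum_eq_mul 1 i
  have hsum : ∑ d ∈ i.divisors, ((moebius (i / d) : ℤ) : ℚ) * ((q : ℚ) ^ d + 1)
      = ((necklaceSum q i + necklaceSum 1 i : ℤ) : ℚ) := by
    push_cast [necklaceSum, one_pow, mul_add, mul_one, sum_add_distrib]
    rfl
  refine ⟨N₁ + N₂, ?_⟩
  rw [hsum, h₁, h₂]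
  push_cast
  field_simp

lemma genChoose_zero (a : ℚ) : genChoose a 0 = 1 := by simp [genChoose]

lemma genChoose_natCast (n k : ℕ) : genChoose n k = n.choose k := by
  rcases le_or_gt k n with hkn | hnk
  · rw [genChoose, Nat.choose_eq_descFactorial_div_factorial,
      Nat.cast_div (Nat.factorial_dvd_descFactorial n k) (by positivity),
      Nat.descFactorial_eq_prod_range, Nat.cast_prod]
    exact congrArg (· / _) <| prod_congr rfl fun j hj =>
      (Nat.cast_sub (by rw [mem_range] at hj; omega)).symm
  · rw [Nat.choose_eq_zero_of_lt hnk, genChoose, prod_eq_zero (mem_range.2 hnk) (sub_self _)]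
    simp

lemma bnd_apply (j : ℕ) : bnd j = if j < 6 then 5 else 0 := by
  simp [bnd, Finsupp.finsetSum_apply, Finsupp.single_apply]

lemma support_subset_range_of_le_bnd {m : ℕ →₀ ℕ} (hm : m ≤ bnd) : m.support ⊆ range 6 :=
  fun j hj => mem_range.2 <| by
    by_contra h
    have := hm j
    simp only [bnd_apply, h, if_false, nonpos_iff_eq_zero] at this
    exact Finsupp.mem_support_iff.1 hj this

def multsWeightLeFive : Finset (ℕ × ℕ × ℕ × ℕ × ℕ) :=
  (range 6 ×ˢ range 3 ×ˢ range 2 ×ˢ range 2 ×ˢ range 2).filter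
    fun t => t.1 + 2 * t.2.1 + 3 * t.2.2.1 + 4 * t.2.2.2.1 + 5 * t.2.2.2.2 ≤ 5

noncomputable def finsuppOfMults (t : ℕ × ℕ × ℕ × ℕ × ℕ) : ℕ →₀ ℕ :=
  Finsupp.single 1 t.1 + Finsupp.single 2 t.2.1 + Finsupp.single 3 t.2.2.1 +
    Finsupp.single 4 t.2.2.2.1 + Finsupp.single 5 t.2.2.2.2

lemma finsuppOfMults_injective : Function.Injective finsuppOfMults :=
  Function.LeftInverse.injective (g := fun m => (m 1, m 2, m 3, m 4, m 5)) fun t => by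
    simp [finsuppOfMults]

lemma sum_mul_apply_le_fweight (m : ℕ →₀ ℕ) (s : Finset ℕ) : ∑ i ∈ s, i * m i ≤ fweight m := by
  rw [← sum_filter_ne_zero]
  refine sum_le_sum_of_subset fun i hi => ?_
  simp only [mem_filter, ne_eq, mul_eq_zero, not_or] at hi
  exact Finsupp.mem_support_iff.2 hi.2.2

lemma fweight_eq_of_le_bnd {m : ℕ →₀ ℕ} (hm : m ≤ bnd) :
    fweight m = m 1 + 2 * m 2 + 3 * m 3 + 4 * m 4 + 5 * m 5 := by
  change m.sum (fun i k => i * k) = _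
  rw [Finsupp.sum_of_support_subset m (support_subset_range_of_le_bnd hm) _ (by simp)]
  simp [sum_range_succ]

lemma flength_eq_of_le_bnd {m : ℕ →₀ ℕ} (hm : m ≤ bnd) :
    flength m = m 0 + m 1 + m 2 + m 3 + m 4 + m 5 := by
  change m.sum (fun _ k => k) = _
  rw [Finsupp.sum_of_support_subset m (support_subset_range_of_le_bnd hm) _ (by simp)]
  simp [sum_range_succ]

lemma prod_genChoose_eq_of_le_bnd (a : ℕ → ℚ) {m : ℕ →₀ ℕ} (hm : m ≤ bnd) :
    ∏ i ∈ m.support, genChoose (a i) (m i) = genChoose (a 0) (m 0) * genChoose (a 1) (m 1) *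
      genChoose (a 2) (m 2) * genChoose (a 3) (m 3) * genChoose (a 4) (m 4) *
      genChoose (a 5) (m 5) := by
  change m.prod (fun i k => genChoose (a i) k) = _
  rw [Finsupp.prod_of_support_subset m (support_subset_range_of_le_bnd hm) _
    (by simp [genChoose_zero])]
  simp [prod_range_succ]

lemma finsuppOfMults_le_bnd {t : ℕ × ℕ × ℕ × ℕ × ℕ} (ht : t ∈ multsWeightLeFive) :
    finsuppOfMults t ≤ bnd := by
  simp only [multsWeightLeFive, mem_filter, mem_product, mem_range] at ht
  intro j
  rw [bnd_apply]
  obtain _ | _ | _ | _ | _ | _ | j := j <;> simp [finsuppOfMults] <;> omega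

lemma map_finsuppOfMults :
    multsWeightLeFive.map ⟨finsuppOfMults, finsuppOfMults_injective⟩ =
      (Iic bnd).filter (fun m => m 0 = 0 ∧ fweight m ≤ 5) := by
  ext m
  simp only [mem_map, mem_filter, mem_Iic, Function.Embedding.coeFn_mk]
  constructor
  · rintro ⟨t, ht, rfl⟩
    have hle := finsuppOfMults_le_bnd ht
    refine ⟨hle, by simp [finsuppOfMults], ?_⟩
    simp only [multsWeightLeFive, mem_filter] at ht
    rw [fweight_eq_of_le_bnd hle]
    simpa [finsuppOfMults] using ht.2
  · rintro ⟨hle, h0, hw⟩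
    rw [fweight_eq_of_le_bnd hle] at hw
    refine ⟨(m 1, m 2, m 3, m 4, m 5), ?_, ?_⟩
    · simp only [multsWeightLeFive, mem_filter, mem_product, mem_range]
      omega
    · ext j
      obtain _ | _ | _ | _ | _ | _ | j := j
      all_goals simp [finsuppOfMults, h0]
      have := hle (j + 6)
      simp [bnd_apply] at this
      exact this.symm

lemma sum_filter_le_eq_sum_mults (lam : ℕ → ℚ) (hlam : ∀ i, ∃ n : ℕ, lam i = n)
    (hlam0 : lam 0 = 0) :
    ∑ m ∈ (Iic bnd).filter (fun m => (∀ i, (m i : ℚ) ≤ lam i) ∧ fweight m ≤ 5),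
        (-1 : ℚ) ^ flength m * ∏ i ∈ m.support, genChoose (lam i) (m i) =
      ∑ t ∈ multsWeightLeFive, (-1 : ℚ) ^ (t.1 + t.2.1 + t.2.2.1 + t.2.2.2.1 + t.2.2.2.2) *
        (genChoose (lam 1) t.1 * genChoose (lam 2) t.2.1 * genChoose (lam 3) t.2.2.1 *
          genChoose (lam 4) t.2.2.2.1 * genChoose (lam 5) t.2.2.2.2) := by
  choose L hL using hlam
  have hL0 : L 0 = 0 := by exact_mod_cast (hL 0).symm.trans hlam0
  simp only [hL]
  set F := fun m : ℕ →₀ ℕ => (-1 : ℚ) ^ flength m * ∏ i ∈ m.support, genChoose (L i) (m i)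
  have hvanish : ∀ m, F m ≠ 0 → ∀ i, m i ≤ L i := by
    intro m hm i
    by_contra! hlt
    refine hm (mul_eq_zero_of_right _ (prod_eq_zero (i := i) (by simp; omega) ?_))
    rw [genChoose_natCast, Nat.choose_eq_zero_of_lt hlt, Nat.cast_zero]
  calc ∑ m ∈ (Iic bnd).filter (fun m => (∀ i, (m i : ℚ) ≤ L i) ∧ fweight m ≤ 5), F m
      = ∑ m ∈ (Iic bnd).filter (fun m => m 0 = 0 ∧ fweight m ≤ 5), F m := by
        rw [sum_filter, sum_filter]
        refine sum_congr rfl fun m _ => ?_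
        by_cases hm : F m = 0
        · simp [hm]
        have hle := hvanish m hm
        have h0 : m 0 = 0 := by have := hle 0; omega
        have hle' : ∀ i, (m i : ℚ) ≤ L i := fun i => by exact_mod_cast hle i
        simp only [hle', h0, forall_const, true_and]
    _ = ∑ t ∈ multsWeightLeFive, F (finsuppOfMults t) := by
        rw [← map_finsuppOfMults, sum_map]
        rfl
    _ = _ := sum_congr rfl fun t ht => by
        have hle := finsuppOfMults_le_bnd ht
        simp only [F]
        rw [flength_eq_of_le_bnd hle, prod_genChoose_eq_of_le_bnd _ hle]
        simp [finsuppOfMults, genChoose_zero]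

lemma sum_mults_genChoose_eq_zero (q : ℚ) (e₁ e₂ e₃ : ℕ) (he : e₁ + 2 * e₂ + 3 * e₃ ≤ 3) :
    ∑ t ∈ multsWeightLeFive, (-1 : ℚ) ^ (t.1 + t.2.1 + t.2.2.1 + t.2.2.2.1 + t.2.2.2.2) *
      (genChoose (e₁ + (q + 1)) t.1 * genChoose (e₂ + (q ^ 2 - q) / 2) t.2.1 *
        genChoose (e₃ + (q ^ 3 - q) / 3) t.2.2.1 * genChoose ((q ^ 4 - q ^ 2) / 4) t.2.2.2.1 *
        genChoose ((q ^ 5 - q) / 5) t.2.2.2.2) = 0 := by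
  simp only [multsWeightLeFive, sum_filter, sum_product, sum_range_succ, sum_range_zero]
  norm_num [genChoose, prod_range_succ, Nat.factorial]
  have he₁ : e₁ ≤ 3 := by omega
  have he₂ : e₂ ≤ 1 := by omega
  have he₃ : e₃ ≤ 1 := by omega
  interval_cases e₁ <;> interval_cases e₂ <;> interval_cases e₃ <;> first | omega | (push_cast; ring)

theorem sigma_five_of_double_line_general (q : ℕ)
    (ρ : ℕ → ℚ)
    (hρ : ∀ i : ℕ, 1 ≤ i → ρ i = (1 / (i : ℚ)) * ∑ d ∈ i.divisors,
        ((ArithmeticFunction.moebius (i / d) : ℤ) : ℚ) * ((q : ℚ) ^ d + 1))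
    (eta : ℕ →₀ ℕ) (heta : fweight eta ≤ 3)
    (lam : ℕ → ℚ)
    (hlam : ∀ i : ℕ, lam i = if i = 0 then 0 else (eta i : ℚ) + ρ i) :
    (∀ i : ℕ, 1 ≤ i → ∃ n : ℕ, ρ i = (n : ℚ)) ∧
    -(∑ m ∈ (Finset.Iic bnd).filter
          (fun m => (∀ i : ℕ, (m i : ℚ) ≤ lam i) ∧ fweight m ≤ 5),
        (-1 : ℚ) ^ (flength m) * ∏ i ∈ m.support, genChoose (lam i) (m i)) = 0 := by
  have hρ_nat : ∀ i, 1 ≤ i → ∃ n : ℕ, ρ i = n := fun i hi =>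
    hρ i hi ▸ exists_nat_eq_inv_mul_sum_moebius q i (by omega)
  refine ⟨hρ_nat, ?_⟩
  have hμ4 : moebius 4 = 0 := moebius_eq_zero_of_not_squarefree (by decide)
  obtain ⟨hρ₁, hρ₂, hρ₃, hρ₄, hρ₅⟩ : ρ 1 = q + 1 ∧ ρ 2 = (q ^ 2 - q) / 2 ∧
      ρ 3 = (q ^ 3 - q) / 3 ∧ ρ 4 = (q ^ 4 - q ^ 2) / 4 ∧ ρ 5 = (q ^ 5 - q) / 5 := by
    refine ⟨?_, ?_, ?_, ?_, ?_⟩ <;> rw [hρ _ (by norm_num)] <;>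
      simp [Nat.divisors_ofNat, moebius_apply_prime, Nat.prime_two, Nat.prime_three,
        Nat.prime_five, hμ4] <;> ring
  have heta_eq_zero : ∀ i, 4 ≤ i → eta i = 0 := fun i hi => by
    have := (sum_mul_apply_le_fweight eta {i}).trans heta
    rw [sum_singleton] at this
    nlinarith
  have heta_weight : eta 1 + 2 * eta 2 + 3 * eta 3 ≤ 3 := by
    have := (sum_mul_apply_le_fweight eta {1, 2, 3}).trans heta
    simp at this
    omega
  have hlam_nat : ∀ i, ∃ n : ℕ, lam i = n := fun i => by
    rcases Nat.eq_zero_or_pos i with rfl | hi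
    · exact ⟨0, by simp [hlam]⟩
    · obtain ⟨n, hn⟩ := hρ_nat i hi
      exact ⟨eta i + n, by rw [hlam, if_neg hi.ne', hn]; push_cast; rfl⟩
  rw [neg_eq_zero, sum_filter_le_eq_sum_mults lam hlam_nat (by simp [hlam])]
  simp only [hlam, one_ne_zero, OfNat.ofNat_ne_zero, if_false, hρ₁, hρ₂, hρ₃, hρ₄, hρ₅,
    heta_eq_zero 4 le_rfl, heta_eq_zero 5 (by norm_num), Nat.cast_zero, zero_add]
  exact sum_mults_genChoose_eq_zero q (eta 1) (eta 2) (eta 3) heta_weight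

/-- Let `q` be a positive integer and `ρ i = (1/i) Σ_{d ∣ i} μ(i/d)(q^d + 1)`
for `i ≥ 1`; each `ρ i` is a nonnegative integer.  For any finitely supported
`η : {1,2,…} → ℕ` of weight `≤ 3` (encoded as `eta : ℕ →₀ ℕ` with `eta 0 = 0`), setting
`λ = η + ρ` (an infinite partition), one has
`σ₅(λ) = −Σ_{μ ≤ λ, |μ| ≤ 5} (−1)^{ℓ(μ)} Π_{i ≥ 1} binom(λ_i, μ_i) = 0`, the sum being over
finitely supported `μ` with `μ_i ≤ λ_i` for all `i` and `Σ_i i·μ_i ≤ 5`. -/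
theorem sigma_five_of_double_line (q : ℕ) (hq : 1 ≤ q)
    (ρ : ℕ → ℚ)
    (hρ : ∀ i : ℕ, 1 ≤ i → ρ i = (1 / (i : ℚ)) * ∑ d ∈ i.divisors,
        ((ArithmeticFunction.moebius (i / d) : ℤ) : ℚ) * ((q : ℚ) ^ d + 1))
    (eta : ℕ →₀ ℕ) (heta0 : eta 0 = 0) (heta : fweight eta ≤ 3)
    (lam : ℕ → ℚ)
    (hlam : ∀ i : ℕ, lam i = if i = 0 then 0 else (eta i : ℚ) + ρ i) :
    (∀ i : ℕ, 1 ≤ i → ∃ n : ℕ, ρ i = (n : ℚ)) ∧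
    -(∑ m ∈ (Finset.Iic bnd).filter
          (fun m => (∀ i : ℕ, (m i : ℚ) ≤ lam i) ∧ fweight m ≤ 5),
        (-1 : ℚ) ^ (flength m) * ∏ i ∈ m.support, genChoose (lam i) (m i)) = 0 :=
  sigma_five_of_double_line_general q ρ hρ eta heta lam hlam
end

section
/- Let q be a prime power, let e₁, e₂, e₃ be the standard basis of 𝔽_q³, and fix α ∈ 𝔽_{q²} with α ∉ 𝔽_q. In 𝔽_{q²}³ let U = {(x,y,z) : x + α·y = 0} and W = {(x,y,z) : x + α^q·y = 0}. The subgroup of PGL₃(𝔽_q) = GL₃(𝔽_q)/scalars consisting of classes of matrices g ∈ GL₃(𝔽_q) such that g·span(e₃) = span(e₃) in 𝔽_q³ and, regarding g as a matrix over 𝔽_{q²}, {g·U, g·W} = {U, W}, has cardinality 2(q⁴ − q²). -/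
/-!
A matrix `g` fixing the line `F e₃` is block lower triangular, with a `2 × 2` block `A` over `F`.
Identifying `F²` with `K` through `(x, y) ↦ x + β y` for `β ∉ F`, `g` maps the plane
`x + γ y = 0` of `K³` onto `x + β y = 0` exactly when `A`, read from `γ`-coordinates to
`β`-coordinates, is multiplication by some `l ∈ Kˣ`; with the free bottom row and the nonzero
corner entry this gives `(q² - 1) q² (q - 1)` matrices. Since `g` is defined over `F` it commutes
with the Frobenius, which swaps `U` and `W`, so `g` stabilizes `{U, W}` iff `gU = U` or `gU = W`,
two disjoint conditions. The stabilizer in `GL₃(𝔽_q)` therefore has `2 (q² - 1) q² (q - 1)`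
elements and is a union of cosets of the centre `𝔽_qˣ`, so its image in `PGL₃(𝔽_q)` has
`2 (q⁴ - q²)` elements.
-/

lemma QuotientGroup.card_exists_mk_mul_card {G : Type*} [Group G] (N : Subgroup G)
    {P : G → Prop} (hP : ∀ g, P g → ∀ n ∈ N, P (g * n)) :
    Nat.card {x : G ⧸ N // ∃ g : G, (g : G ⧸ N) = x ∧ P g} * Nat.card N =
      Nat.card {g // P g} := by
  have hpre : QuotientGroup.mk ⁻¹' {x : G ⧸ N | ∃ g : G, (g : G ⧸ N) = x ∧ P g} =
      {g | P g} := by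
    ext g
    refine ⟨fun ⟨g', hg', hP'⟩ ↦ ?_, fun h ↦ ⟨g, rfl, h⟩⟩
    simpa using hP g' hP' _ (QuotientGroup.eq.1 hg')
  have := QuotientGroup.card_preimage_mk N {x : G ⧸ N | ∃ g : G, (g : G ⧸ N) = x ∧ P g}
  rw [hpre] at this
  exact (mul_comm _ _).trans this.symm

lemma Matrix.GeneralLinearGroup.card_center {n R : Type*} [Fintype n] [DecidableEq n]
    [Nonempty n] [CommRing R] : Nat.card (Subgroup.center (GL n R)) = Nat.card Rˣ := by
  have hinj : Function.Injective (GeneralLinearGroup.scalar n : Rˣ →* GL n R) := fun u v h ↦ by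
    have := congrArg (fun g : GL n R ↦ (g : Matrix n n R) (Classical.arbitrary n)
      (Classical.arbitrary n)) h
    exact Units.ext (by simpa [GeneralLinearGroup.coe_scalar] using this)
  rw [GeneralLinearGroup.center_eq_range_scalar]
  exact Nat.card_congr (MonoidHom.ofInjective hinj).toEquiv.symm

section FieldExtension

variable {F K : Type*} [Field F] [Field K] [Algebra F K]

lemma algebraMap_add_mul_algebraMap_eq_zero_iff {β : K} (hβ : β ∉ Set.range (algebraMap F K))
    {x y : F} : algebraMap F K x + β * algebraMap F K y = 0 ↔ x = 0 ∧ y = 0 := by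
  refine ⟨fun h ↦ ?_, fun ⟨hx, hy⟩ ↦ by simp [hx, hy]⟩
  by_cases hy : y = 0
  · subst hy
    simpa using h
  · refine absurd ⟨-x / y, ?_⟩ hβ
    have : algebraMap F K y ≠ 0 := by simpa using hy
    rw [map_div₀, map_neg, div_eq_iff this]
    linear_combination -h

lemma FiniteField.pow_card_ne_self_of_notMem_range [Fintype F] {α : K}
    (hα : α ∉ Set.range (algebraMap F K)) : α ^ Fintype.card F ≠ α := by
  classical
  intro hfix
  open Polynomial in
  -- `X ^ q - X` would have the `q + 1` roots `F ∪ {α}`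
  have hroots : (insert α (Finset.univ.image (algebraMap F K))).val ⊆
      (X ^ Fintype.card F - X : K[X]).roots := by
    have hne : (X ^ Fintype.card F - X : K[X]) ≠ 0 :=
      FiniteField.X_pow_card_sub_X_ne_zero K Fintype.one_lt_card
    intro x hx
    rw [mem_roots hne, IsRoot, eval_sub, eval_pow, eval_X, sub_eq_zero]
    rcases Finset.mem_insert.mp hx with rfl | hx
    · exact hfix
    · obtain ⟨a, -, rfl⟩ := Finset.mem_image.mp hx
      rw [← map_pow, FiniteField.pow_card]
  have := Polynomial.card_le_degree_of_subset_roots hroots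
  rw [FiniteField.X_pow_card_sub_X_natDegree_eq K Fintype.one_lt_card,
    Finset.card_insert_of_notMem (by simpa using hα),
    Finset.card_image_of_injective _ (algebraMap F K).injective, Finset.card_univ] at this
  omega

lemma FiniteField.pow_card_notMem_range [Fintype F] {α : K}
    (hα : α ∉ Set.range (algebraMap F K)) : α ^ Fintype.card F ∉ Set.range (algebraMap F K) := by
  rintro ⟨a, ha⟩
  refine hα ⟨a, (FiniteField.frobeniusAlgHom F K).toRingHom.injective ?_⟩
  change (algebraMap F K a) ^ Fintype.card F = α ^ Fintype.card F
  rw [← map_pow, FiniteField.pow_card, ha]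

end FieldExtension

namespace NonsplitNode

open Matrix

section Planes

variable {F K : Type*} [Field F] [Field K] [Algebra F K]

noncomputable def xyForm (β : K) : (Fin 3 → K) →ₗ[K] K :=
  LinearMap.proj 0 + β • LinearMap.proj 1

lemma mem_ker_xyForm {β : K} {v : Fin 3 → K} :
    v ∈ LinearMap.ker (xyForm β) ↔ v 0 + β * v 1 = 0 :=
  Iff.rfl

lemma finrank_ker_xyForm (β : K) : Module.finrank K (LinearMap.ker (xyForm β)) = 2 := by
  have hsurj : Function.Surjective (xyForm β) := fun k ↦ ⟨Pi.single 0 k, by simp [xyForm]⟩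
  have := LinearMap.finrank_range_add_finrank_ker (xyForm β)
  rw [LinearMap.range_eq_top.2 hsurj, finrank_top, Module.finrank_self,
    Module.finrank_fin_fun] at this
  omega

lemma map_ker_xyForm_le_iff {M : Matrix (Fin 3) (Fin 3) K} (h02 : M 0 2 = 0) (h12 : M 1 2 = 0)
    (γ β : K) :
    (LinearMap.ker (xyForm γ)).map (toLin' M) ≤ LinearMap.ker (xyForm β) ↔
      M 0 1 + β * M 1 1 = γ * (M 0 0 + β * M 1 0) := by
  simp only [Submodule.map_le_iff_le_comap]
  constructor
  · intro h
    have hv : ![-γ, 1, 0] ∈ LinearMap.ker (xyForm γ) := mem_ker_xyForm.2 (by simp)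
    have := mem_ker_xyForm.1 (h hv)
    simp [mulVec, dotProduct, Fin.sum_univ_three] at this
    linear_combination this
  · intro hcond v hv
    rw [mem_ker_xyForm] at hv
    rw [Submodule.mem_comap, mem_ker_xyForm]
    simp only [toLin'_apply, mulVec, dotProduct, Fin.sum_univ_three, h02, h12]
    linear_combination v 1 * hcond + (M 0 0 + β * M 1 0) * hv

lemma map_ker_xyForm_eq_iff {M : GL (Fin 3) K} (h02 : M 0 2 = 0) (h12 : M 1 2 = 0) (γ β : K) :
    (LinearMap.ker (xyForm γ)).map (toLin' M) = LinearMap.ker (xyForm β) ↔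
      M 0 1 + β * M 1 1 = γ * (M 0 0 + β * M 1 0) := by
  rw [← map_ker_xyForm_le_iff h02 h12]
  refine ⟨le_of_eq, fun hle ↦ Submodule.eq_of_le_of_finrank_le hle ?_⟩
  rw [← (Submodule.equivMapOfInjective _ (mulVec_injective_of_isUnit M.isUnit) _).finrank_eq,
    finrank_ker_xyForm, finrank_ker_xyForm]

lemma map_span_single_two_eq_iff (g : GL (Fin 3) F) :
    (Submodule.span F {(Pi.single 2 1 : Fin 3 → F)}).map
        (toLin' (g : Matrix (Fin 3) (Fin 3) F)) = Submodule.span F {Pi.single 2 1} ↔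
      g 0 2 = 0 ∧ g 1 2 = 0 := by
  rw [Submodule.map_span, Set.image_singleton, eq_comm,
    Submodule.span_singleton_eq_span_singleton]
  constructor
  · rintro ⟨c, hc⟩
    have h0 := congrFun hc 0
    have h1 := congrFun hc 1
    simp [mulVec_single] at h0 h1
    exact ⟨h0.symm, h1.symm⟩
  · rintro ⟨h02, h12⟩
    have h22 : g 2 2 ≠ 0 := fun h22 ↦ g.det_ne_zero <|
      det_eq_zero_of_column_eq_zero 2 (by simp [Fin.forall_fin_succ, h02, h12, h22])
    refine ⟨Units.mk0 _ h22, funext fun i ↦ ?_⟩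
    fin_cases i <;> simp [mulVec_single, h02, h12]

/-- For invertible `g`: `g` fixes the line `F e₃` and maps the plane `x + γ y = 0` of `K³` onto
`x + β y = 0` (`mapsPlane_iff`). In coordinates: the columns `c₀, c₁` of the upper left block of
`g`, read in `K` through `(x, y) ↦ x + β y`, satisfy `c₁ = γ c₀`. -/
def MapsPlane (γ β : K) (g : Matrix (Fin 3) (Fin 3) F) : Prop :=
  g 0 2 = 0 ∧ g 1 2 = 0 ∧
    algebraMap F K (g 0 1) + β * algebraMap F K (g 1 1) =
      γ * (algebraMap F K (g 0 0) + β * algebraMap F K (g 1 0))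

lemma mapsPlane_iff {γ β : K} {g : GL (Fin 3) F} :
    MapsPlane γ β (g : Matrix (Fin 3) (Fin 3) F) ↔
      (Submodule.span F {(Pi.single 2 1 : Fin 3 → F)}).map
          (toLin' (g : Matrix (Fin 3) (Fin 3) F)) = Submodule.span F {Pi.single 2 1} ∧
        (LinearMap.ker (xyForm γ)).map (toLin' ((g : Matrix (Fin 3) (Fin 3) F).map
          (algebraMap F K))) = LinearMap.ker (xyForm β) := by
  rw [map_span_single_two_eq_iff]
  constructor
  · rintro ⟨h02, h12, h⟩
    exact ⟨⟨h02, h12⟩, (map_ker_xyForm_eq_iff (M := GeneralLinearGroup.map (algebraMap F K) g)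
      (by simp [h02]) (by simp [h12]) γ β).2 h⟩
  · rintro ⟨⟨h02, h12⟩, h⟩
    exact ⟨h02, h12, (map_ker_xyForm_eq_iff (M := GeneralLinearGroup.map (algebraMap F K) g)
      (by simp [h02]) (by simp [h12]) γ β).1 h⟩

lemma MapsPlane.map_algHom {γ β : K} {g : Matrix (Fin 3) (Fin 3) F} (h : MapsPlane γ β g)
    (σ : K →ₐ[F] K) : MapsPlane (σ γ) (σ β) g := by
  obtain ⟨h02, h12, h⟩ := h
  refine ⟨h02, h12, ?_⟩
  simpa using congrArg σ h

lemma MapsPlane.smul {γ β : K} {g : Matrix (Fin 3) (Fin 3) F} (h : MapsPlane γ β g) (c : F) :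
    MapsPlane γ β (c • g) := by
  obtain ⟨h02, h12, h⟩ := h
  refine ⟨by simp [h02], by simp [h12], ?_⟩
  simp only [Matrix.smul_apply, smul_eq_mul, map_mul]
  linear_combination algebraMap F K c * h

lemma not_mapsPlane_and_mapsPlane {α β₁ β₂ : K} (hα : α ∉ Set.range (algebraMap F K))
    (hβ : β₁ ≠ β₂) {g : Matrix (Fin 3) (Fin 3) F} (hg : g.det ≠ 0) :
    ¬(MapsPlane α β₁ g ∧ MapsPlane α β₂ g) := by
  rintro ⟨⟨-, h12, h₁⟩, ⟨-, -, h₂⟩⟩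
  -- subtracting the two relations leaves `(β₁ - β₂) (g₁₁ - α g₁₀) = 0`, so row 1 of `g` vanishes
  have hrow : algebraMap F K (g 1 1) + α * algebraMap F K (-g 1 0) = 0 := by
    have : (β₁ - β₂) * (algebraMap F K (g 1 1) + α * algebraMap F K (-g 1 0)) = 0 := by
      rw [map_neg]; linear_combination h₁ - h₂
    exact (mul_eq_zero.1 this).resolve_left (sub_ne_zero.2 hβ)
  obtain ⟨h11, h10⟩ := (algebraMap_add_mul_algebraMap_eq_zero_iff hα).1 hrow
  exact hg (det_eq_zero_of_row_eq_zero 1 fun j ↦ by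
    fin_cases j <;> simp_all)

variable [Fintype F]

def StabilizesNode (α : K) (g : GL (Fin 3) F) : Prop :=
  (Submodule.span F {(Pi.single 2 1 : Fin 3 → F)}).map
      (toLin' (g : Matrix (Fin 3) (Fin 3) F)) = Submodule.span F {Pi.single 2 1} ∧
    ({(LinearMap.ker (xyForm α)).map
        (toLin' ((g : Matrix (Fin 3) (Fin 3) F).map (algebraMap F K))),
      (LinearMap.ker (xyForm (α ^ Fintype.card F))).map
        (toLin' ((g : Matrix (Fin 3) (Fin 3) F).map (algebraMap F K)))} :
        Set (Submodule K (Fin 3 → K))) =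
      {LinearMap.ker (xyForm α), LinearMap.ker (xyForm (α ^ Fintype.card F))}

/-- Since `g` has entries in `F`, it commutes with the Frobenius, which swaps the two planes:
so `g` preserves the pair as soon as it sends the first plane to one of them. -/
lemma stabilizesNode_iff [Fintype K] (hK : Fintype.card K = Fintype.card F ^ 2) {α : K}
    {g : GL (Fin 3) F} :
    StabilizesNode α g ↔ MapsPlane α α (g : Matrix (Fin 3) (Fin 3) F) ∨
      MapsPlane α (α ^ Fintype.card F) (g : Matrix (Fin 3) (Fin 3) F) := by
  have hfrob {γ β : K} (h : MapsPlane γ β (g : Matrix (Fin 3) (Fin 3) F)) :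
      MapsPlane (γ ^ Fintype.card F) (β ^ Fintype.card F) (g : Matrix (Fin 3) (Fin 3) F) :=
    h.map_algHom (FiniteField.frobeniusAlgHom F K)
  have hαα : (α ^ Fintype.card F) ^ Fintype.card F = α := by
    rw [← pow_mul, ← sq, ← hK, FiniteField.pow_card]
  constructor
  · rintro ⟨hspan, hpair⟩
    rcases Set.pair_eq_pair_iff.1 hpair with ⟨h, -⟩ | ⟨h, -⟩
    · exact .inl (mapsPlane_iff.2 ⟨hspan, h⟩)
    · exact .inr (mapsPlane_iff.2 ⟨hspan, h⟩)
  · rintro (h | h)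
    · obtain ⟨hspan, hU⟩ := mapsPlane_iff.1 h
      obtain ⟨-, hW⟩ := mapsPlane_iff.1 (hfrob h)
      exact ⟨hspan, by rw [hU, hW]⟩
    · obtain ⟨hspan, hU⟩ := mapsPlane_iff.1 h
      obtain ⟨-, hW⟩ := mapsPlane_iff.1 (hαα ▸ hfrob h)
      exact ⟨hspan, by rw [hU, hW, Set.pair_comm]⟩

end Planes

section Count

variable {F K : Type*} [Field F] [Field K] [Algebra F K] [Fintype F] [Fintype K]

section Coordinates

variable (hK : Fintype.card K = Fintype.card F ^ 2) {β : K} (hβ : β ∉ Set.range (algebraMap F K))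

noncomputable def coordEquiv : F × F ≃ K :=
  Equiv.ofBijective (fun p ↦ algebraMap F K p.1 + β * algebraMap F K p.2) <| by
    refine (Fintype.bijective_iff_injective_and_card _).2 ⟨fun p p' h ↦ ?_, by simp [hK, sq]⟩
    have := (algebraMap_add_mul_algebraMap_eq_zero_iff hβ (x := p.1 - p'.1) (y := p.2 - p'.2)).1
      (by simp only [map_sub]; linear_combination h)
    exact Prod.ext (sub_eq_zero.1 this.1) (sub_eq_zero.1 this.2)

lemma coordEquiv_apply (p : F × F) :
    coordEquiv hK hβ p = algebraMap F K p.1 + β * algebraMap F K p.2 := rfl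

@[simp]
lemma coordEquiv_symm_zero : (coordEquiv hK hβ).symm 0 = 0 :=
  (coordEquiv hK hβ).symm_apply_eq.2 (by simp [coordEquiv_apply])

/-- The upper left block is `φ_β⁻¹ ∘ (l • ·) ∘ φ_α`, where `φ_γ (x, y) = x + γ y`. -/
noncomputable def planeMatrix (α l : K) (r s t : F) : Matrix (Fin 3) (Fin 3) F :=
  let u := (coordEquiv hK hβ).symm l
  let v := (coordEquiv hK hβ).symm (α * l)
  !![u.1, v.1, 0; u.2, v.2, 0; r, s, t]

variable {hK hβ}

lemma coordEquiv_planeMatrix (α l : K) (r s t : F) :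
    coordEquiv hK hβ (planeMatrix hK hβ α l r s t 0 0, planeMatrix hK hβ α l r s t 1 0) = l :=
  (coordEquiv hK hβ).apply_symm_apply l

lemma mapsPlane_planeMatrix (α l : K) (r s t : F) :
    MapsPlane α β (planeMatrix hK hβ α l r s t) := by
  refine ⟨rfl, rfl, ?_⟩
  have hu := (coordEquiv hK hβ).apply_symm_apply l
  have hv := (coordEquiv hK hβ).apply_symm_apply (α * l)
  simp only [coordEquiv_apply] at hu hv
  simp only [planeMatrix, of_apply, cons_val', cons_val_zero, cons_val_one, empty_val',
    cons_val_fin_one, hu, hv]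

lemma det_planeMatrix_ne_zero {α : K} (hα : α ∉ Set.range (algebraMap F K)) {l : K} (hl : l ≠ 0)
    (r s : F) {t : F} (ht : t ≠ 0) : (planeMatrix hK hβ α l r s t).det ≠ 0 := by
  set u := (coordEquiv hK hβ).symm l
  set v := (coordEquiv hK hβ).symm (α * l)
  have hu : algebraMap F K u.1 + β * algebraMap F K u.2 = l :=
    (coordEquiv hK hβ).apply_symm_apply l
  have hv : algebraMap F K v.1 + β * algebraMap F K v.2 = α * l :=
    (coordEquiv hK hβ).apply_symm_apply (α * l)
  have hdet : (planeMatrix hK hβ α l r s t).det = t * (u.1 * v.2 - v.1 * u.2) := by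
    simp [planeMatrix, det_fin_three, u, v]
    ring
  rw [hdet]
  refine mul_ne_zero ht fun h ↦ hl ?_
  -- if the two columns are proportional, `l` kills both `v₂ - α u₂` and `v₁ - α u₁`
  have h' :
      algebraMap F K u.1 * algebraMap F K v.2 = algebraMap F K v.1 * algebraMap F K u.2 := by
    simpa [sub_eq_zero] using congrArg (algebraMap F K) h
  have h2 : l * (algebraMap F K v.2 + α * algebraMap F K (-u.2)) = 0 := by
    rw [map_neg]
    linear_combination (-algebraMap F K v.2) * hu + algebraMap F K u.2 * hv + h'
  have h1 : l * (algebraMap F K v.1 + α * algebraMap F K (-u.1)) = 0 := by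
    rw [map_neg]
    linear_combination (-algebraMap F K v.1) * hu + algebraMap F K u.1 * hv - β * h'
  obtain ⟨-, hu2⟩ := (algebraMap_add_mul_algebraMap_eq_zero_iff hα).1
    ((mul_eq_zero.1 h2).resolve_left hl)
  obtain ⟨-, hu1⟩ := (algebraMap_add_mul_algebraMap_eq_zero_iff hα).1
    ((mul_eq_zero.1 h1).resolve_left hl)
  rw [← hu, neg_eq_zero.1 hu1, neg_eq_zero.1 hu2]
  simp

lemma MapsPlane.eq_planeMatrix {α : K} {g : Matrix (Fin 3) (Fin 3) F} (h : MapsPlane α β g) :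
    g = planeMatrix hK hβ α (coordEquiv hK hβ (g 0 0, g 1 0)) (g 2 0) (g 2 1) (g 2 2) := by
  obtain ⟨h02, h12, h⟩ := h
  have hv : (coordEquiv hK hβ).symm (α * coordEquiv hK hβ (g 0 0, g 1 0)) = (g 0 1, g 1 1) := by
    rw [Equiv.symm_apply_eq, coordEquiv_apply, coordEquiv_apply, h]
  ext i j
  fin_cases i <;> fin_cases j <;> simp [planeMatrix, hv, h02, h12]

end Coordinates

lemma card_mapsPlane (hK : Fintype.card K = Fintype.card F ^ 2) {β : K}
    (hβ : β ∉ Set.range (algebraMap F K)) {α : K} (hα : α ∉ Set.range (algebraMap F K)) :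
    Nat.card {g : GL (Fin 3) F // MapsPlane α β (g : Matrix (Fin 3) (Fin 3) F)} =
      (Fintype.card K - 1) * Fintype.card F ^ 2 * (Fintype.card F - 1) := by
  let f (p : Kˣ × F × F × Fˣ) : GL (Fin 3) F :=
    GeneralLinearGroup.mkOfDetNeZero (planeMatrix hK hβ α p.1 p.2.1 p.2.2.1 p.2.2.2)
      (det_planeMatrix_ne_zero hα p.1.ne_zero _ _ p.2.2.2.ne_zero)
  have hf : Function.Injective f := by
    rintro ⟨l, r, s, t⟩ ⟨l', r', s', t'⟩ h
    have hM := congrArg Units.val h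
    have hl := coordEquiv_planeMatrix (hK := hK) (hβ := hβ) α l r s t
    rw [show planeMatrix hK hβ α l r s t = planeMatrix hK hβ α l' r' s' t' from hM,
      coordEquiv_planeMatrix] at hl
    have h20 := congrFun (congrFun hM 2) 0
    have h21 := congrFun (congrFun hM 2) 1
    have h22 := congrFun (congrFun hM 2) 2
    simp only [f, planeMatrix] at h20 h21 h22
    simp_all [Units.ext_iff]
  have hrange :
      Set.range f = {g : GL (Fin 3) F | MapsPlane α β (g : Matrix (Fin 3) (Fin 3) F)} := by
    refine Set.Subset.antisymm (Set.range_subset_iff.2 fun p ↦ mapsPlane_planeMatrix _ _ _ _ _)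
      fun g hg ↦ ?_
    have hg' := hg.eq_planeMatrix (hK := hK) (hβ := hβ)
    have hl : coordEquiv hK hβ (g 0 0, g 1 0) ≠ 0 := fun hl ↦ g.det_ne_zero <| by
      rw [hg', hl]
      refine det_eq_zero_of_row_eq_zero 0 fun j ↦ ?_
      fin_cases j <;> simp [planeMatrix]
    have ht : g 2 2 ≠ 0 := fun ht ↦ g.det_ne_zero <|
      det_eq_zero_of_column_eq_zero 2 (by simp [Fin.forall_fin_succ, hg.1, hg.2.1, ht])
    exact ⟨⟨Units.mk0 _ hl, g 2 0, g 2 1, Units.mk0 _ ht⟩, Units.ext hg'.symm⟩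
  rw [← Set.coe_ofPred, ← hrange, Nat.card_range_of_injective hf, Nat.card_prod, Nat.card_prod,
    Nat.card_prod, Nat.card_units, Nat.card_units, Nat.card_eq_fintype_card,
    Nat.card_eq_fintype_card]
  ring

lemma card_stabilizesNode (hK : Fintype.card K = Fintype.card F ^ 2) {α : K}
    (hα : α ∉ Set.range (algebraMap F K)) :
    Nat.card {g : GL (Fin 3) F // StabilizesNode α g} =
      2 * ((Fintype.card K - 1) * Fintype.card F ^ 2 * (Fintype.card F - 1)) := by
  classical
  have hdisj : Disjoint (fun g : GL (Fin 3) F ↦ MapsPlane α α (g : Matrix (Fin 3) (Fin 3) F))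
      (fun g ↦ MapsPlane α (α ^ Fintype.card F) (g : Matrix (Fin 3) (Fin 3) F)) :=
    fun _ h₁ h₂ g hg ↦ not_mapsPlane_and_mapsPlane hα
      (FiniteField.pow_card_ne_self_of_notMem_range hα).symm g.det_ne_zero ⟨h₁ g hg, h₂ g hg⟩
  rw [Nat.card_congr ((Equiv.subtypeEquivRight fun g ↦ stabilizesNode_iff hK).trans
      (subtypeOrEquiv _ _ hdisj)), Nat.card_sum, card_mapsPlane hK hα hα,
    card_mapsPlane hK (FiniteField.pow_card_notMem_range hα) hα, two_mul]

lemma StabilizesNode.mul_mem_center (hK : Fintype.card K = Fintype.card F ^ 2) {α : K}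
    {g z : GL (Fin 3) F} (hg : StabilizesNode α g) (hz : z ∈ Subgroup.center (GL (Fin 3) F)) :
    StabilizesNode α (g * z) := by
  rw [GeneralLinearGroup.center_eq_range_scalar] at hz
  obtain ⟨u, rfl⟩ := hz
  have hgu : ((g * GeneralLinearGroup.scalar (Fin 3) u : GL (Fin 3) F) : Matrix (Fin 3) (Fin 3) F)
      = (u : F) • (g : Matrix (Fin 3) (Fin 3) F) := by
    ext i j
    simp [GeneralLinearGroup.coe_scalar, mul_comm]
  rw [stabilizesNode_iff hK] at hg ⊢
  rw [hgu]
  exact hg.imp (·.smul _) (·.smul _)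

end Count

end NonsplitNode

open NonsplitNode

theorem stab_nonsplit_node_card_general (q : ℕ)
    (F : Type) [Field F] [Fintype F] (hF : Fintype.card F = q)
    (K : Type) [Field K] [Fintype K] [Algebra F K] (hK : Fintype.card K = q ^ 2)
    (α : K) (hα : α ∉ Set.range (algebraMap F K)) :
    Nat.card {x : GL (Fin 3) F ⧸ Subgroup.center (GL (Fin 3) F) //
      ∃ g : GL (Fin 3) F, (QuotientGroup.mk g :
          GL (Fin 3) F ⧸ Subgroup.center (GL (Fin 3) F)) = x ∧
        Submodule.map (Matrix.toLin' (g : Matrix (Fin 3) (Fin 3) F))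
            (Submodule.span F {(Pi.single 2 1 : Fin 3 → F)}) =
          Submodule.span F {(Pi.single 2 1 : Fin 3 → F)} ∧
        ({Submodule.map (Matrix.toLin' ((g : Matrix (Fin 3) (Fin 3) F).map (algebraMap F K)))
              (LinearMap.ker ((LinearMap.proj 0 : (Fin 3 → K) →ₗ[K] K) +
                α • (LinearMap.proj 1 : (Fin 3 → K) →ₗ[K] K))),
          Submodule.map (Matrix.toLin' ((g : Matrix (Fin 3) (Fin 3) F).map (algebraMap F K)))
              (LinearMap.ker ((LinearMap.proj 0 : (Fin 3 → K) →ₗ[K] K) +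
                (α ^ q) • (LinearMap.proj 1 : (Fin 3 → K) →ₗ[K] K)))} :
            Set (Submodule K (Fin 3 → K))) =
          {LinearMap.ker ((LinearMap.proj 0 : (Fin 3 → K) →ₗ[K] K) +
              α • (LinearMap.proj 1 : (Fin 3 → K) →ₗ[K] K)),
           LinearMap.ker ((LinearMap.proj 0 : (Fin 3 → K) →ₗ[K] K) +
              (α ^ q) • (LinearMap.proj 1 : (Fin 3 → K) →ₗ[K] K))}} =
    2 * (q ^ 4 - q ^ 2) := by
  subst hF
  set q := Fintype.card F
  have hcount := QuotientGroup.card_exists_mk_mul_card (Subgroup.center (GL (Fin 3) F))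
    fun g hg _ ↦ StabilizesNode.mul_mem_center hK (α := α) hg
  rw [card_stabilizesNode hK hα, Matrix.GeneralLinearGroup.card_center, Nat.card_units,
    Nat.card_eq_fintype_card (α := F), hK] at hcount
  have hq : 1 < q := Fintype.one_lt_card
  have hq4 : q ^ 4 - q ^ 2 = (q ^ 2 - 1) * q ^ 2 := by
    rw [Nat.sub_mul, one_mul, ← pow_add]
  refine Nat.eq_of_mul_eq_mul_right (by omega : 0 < q - 1) (hcount.trans ?_)
  rw [hq4]
  ring

/-- Let `q` be a prime power, `F = 𝔽_q`, `K = 𝔽_{q²}` with `α ∈ K ∖ F`.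
With `U = {(x,y,z) ∈ K³ : x + α·y = 0}` and `W = {(x,y,z) ∈ K³ : x + α^q·y = 0}`, the
subgroup of `PGL₃(𝔽_q) = GL₃(𝔽_q)/center` consisting of the classes of matrices `g` with
`g·span(e₃) = span(e₃)` in `F³` and, viewing `g` as a matrix over `K`,
`{g·U, g·W} = {U, W}`, has cardinality `2(q⁴ − q²)`. -/
theorem stab_nonsplit_node_card (q : ℕ) (hq : IsPrimePow q)
    (F : Type) [Field F] [Fintype F] (hF : Fintype.card F = q)
    (K : Type) [Field K] [Fintype K] [Algebra F K] (hK : Fintype.card K = q ^ 2)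
    (α : K) (hα : α ∉ Set.range (algebraMap F K)) :
    Nat.card {x : GL (Fin 3) F ⧸ Subgroup.center (GL (Fin 3) F) //
      ∃ g : GL (Fin 3) F, (QuotientGroup.mk g :
          GL (Fin 3) F ⧸ Subgroup.center (GL (Fin 3) F)) = x ∧
        Submodule.map (Matrix.toLin' (g : Matrix (Fin 3) (Fin 3) F))
            (Submodule.span F {(Pi.single 2 1 : Fin 3 → F)}) =
          Submodule.span F {(Pi.single 2 1 : Fin 3 → F)} ∧
        ({Submodule.map (Matrix.toLin' ((g : Matrix (Fin 3) (Fin 3) F).map (algebraMap F K)))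
              (LinearMap.ker ((LinearMap.proj 0 : (Fin 3 → K) →ₗ[K] K) +
                α • (LinearMap.proj 1 : (Fin 3 → K) →ₗ[K] K))),
          Submodule.map (Matrix.toLin' ((g : Matrix (Fin 3) (Fin 3) F).map (algebraMap F K)))
              (LinearMap.ker ((LinearMap.proj 0 : (Fin 3 → K) →ₗ[K] K) +
                (α ^ q) • (LinearMap.proj 1 : (Fin 3 → K) →ₗ[K] K)))} :
            Set (Submodule K (Fin 3 → K))) =
          {LinearMap.ker ((LinearMap.proj 0 : (Fin 3 → K) →ₗ[K] K) +
              α • (LinearMap.proj 1 : (Fin 3 → K) →ₗ[K] K)),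
           LinearMap.ker ((LinearMap.proj 0 : (Fin 3 → K) →ₗ[K] K) +
              (α ^ q) • (LinearMap.proj 1 : (Fin 3 → K) →ₗ[K] K))}} =
    2 * (q ^ 4 - q ^ 2) :=
  stab_nonsplit_node_card_general q F hF K hK α hα
end

section
/- Let q be a prime power. The number of 5-element sets of lines in the projective plane ℙ² over 𝔽_q such that there is exactly one point of ℙ² lying on three of the five lines, and no point lies on four or more of the lines, equals (1/12)·(q−2)·q³·(q³−1)·(q²−1). -/
/-!
If `S` has exactly one triple point `P` and no quadruple point, then `T`, the lines of `S` through
`P`, are three lines, and the other two lines `D` meet in a point `R` that lies on no line of `T`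
(otherwise `R` would be a second triple point). Conversely any such `(P, T, R, D)` gives a valid
`S = T ∪ D`, and `S` determines it. Counting the choices in `ℙ²(𝔽_q)`: `q² + q + 1` points `P`,
`C(q + 1, 3)` triples `T` in the pencil at `P`, `(q - 2) q` points `R`, since the points off `T`
are those of the remaining `q - 2` lines through `P` other than `P`, and `C(q, 2)` pairs `D` in the
pencil at `R` avoiding `P`.
-/

open scoped Classical
open Module Finset

namespace Finset

variable {α : Type*} {p : α → Prop} [DecidablePred p] {s t : Finset α}

theorem filter_union_eq_left [DecidableEq α] (hs : ∀ a ∈ s, p a) (ht : ∀ a ∈ t, ¬ p a) :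
    {a ∈ s ∪ t | p a} = s := by
  rw [filter_union, filter_true_of_mem hs, filter_false_of_mem ht, union_empty]

theorem filter_not_union_eq_right [DecidableEq α] (hs : ∀ a ∈ s, p a) (ht : ∀ a ∈ t, ¬ p a) :
    {a ∈ s ∪ t | ¬ p a} = t := by
  rw [filter_union, filter_false_of_mem fun a ha => not_not_intro (hs a ha),
    filter_true_of_mem ht, empty_union]

theorem two_lt_card_filter : 2 < #{a ∈ s | p a} ↔
    ∃ a ∈ s, ∃ b ∈ s, ∃ c ∈ s, a ≠ b ∧ a ≠ c ∧ b ≠ c ∧ p a ∧ p b ∧ p c := by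
  simp only [two_lt_card, mem_filter]
  constructor
  · rintro ⟨a, ⟨ha, pa⟩, b, ⟨hb, pb⟩, c, ⟨hc, pc⟩, hab, hac, hbc⟩
    exact ⟨a, ha, b, hb, c, hc, hab, hac, hbc, pa, pb, pc⟩
  · rintro ⟨a, ha, b, hb, c, hc, hab, hac, hbc, pa, pb, pc⟩
    exact ⟨a, ⟨ha, pa⟩, b, ⟨hb, pb⟩, c, ⟨hc, pc⟩, hab, hac, hbc⟩

theorem three_lt_card_filter : 3 < #{a ∈ s | p a} ↔
    ∃ a ∈ s, ∃ b ∈ s, ∃ c ∈ s, ∃ d ∈ s, a ≠ b ∧ a ≠ c ∧ a ≠ d ∧ b ≠ c ∧ b ≠ d ∧ c ≠ d ∧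
      p a ∧ p b ∧ p c ∧ p d := by
  simp only [three_lt_card, mem_filter]
  constructor
  · rintro ⟨a, ⟨ha, pa⟩, b, ⟨hb, pb⟩, c, ⟨hc, pc⟩, d, ⟨hd, pd⟩, hab, hac, had, hbc, hbd, hcd⟩
    exact ⟨a, ha, b, hb, c, hc, d, hd, hab, hac, had, hbc, hbd, hcd, pa, pb, pc, pd⟩
  · rintro ⟨a, ha, b, hb, c, hc, d, hd, hab, hac, had, hbc, hbd, hcd, pa, pb, pc, pd⟩
    exact ⟨a, ⟨ha, pa⟩, b, ⟨hb, pb⟩, c, ⟨hc, pc⟩, d, ⟨hd, pd⟩, hab, hac, had, hbc, hbd, hcd⟩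

end Finset

variable {K W : Type*} [Field K] [AddCommGroup W] [Module K W]

namespace ProjectivePlane

def IsOnlyTriplePoint (S : Finset (Submodule K W)) (P : Submodule K W) : Prop :=
  finrank K P = 1 ∧ #{L ∈ S | P ≤ L} = 3 ∧
    ∀ Q : Submodule K W, finrank K Q = 1 → Q ≠ P → #{L ∈ S | Q ≤ L} ≤ 2

theorem exists_isOnlyTriplePoint_iff (S : Finset (Submodule K W)) :
    (∃ P, IsOnlyTriplePoint S P) ↔
      (∃! P : Submodule K W, finrank K P = 1 ∧
          ∃ L₁ ∈ S, ∃ L₂ ∈ S, ∃ L₃ ∈ S, L₁ ≠ L₂ ∧ L₁ ≠ L₃ ∧ L₂ ≠ L₃ ∧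
            P ≤ L₁ ∧ P ≤ L₂ ∧ P ≤ L₃) ∧
        ¬∃ P : Submodule K W, finrank K P = 1 ∧
          ∃ L₁ ∈ S, ∃ L₂ ∈ S, ∃ L₃ ∈ S, ∃ L₄ ∈ S,
            L₁ ≠ L₂ ∧ L₁ ≠ L₃ ∧ L₁ ≠ L₄ ∧ L₂ ≠ L₃ ∧ L₂ ≠ L₄ ∧ L₃ ≠ L₄ ∧
            P ≤ L₁ ∧ P ≤ L₂ ∧ P ≤ L₃ ∧ P ≤ L₄ := by
  simp only [← two_lt_card_filter, ← three_lt_card_filter]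
  constructor
  · rintro ⟨P, hP, hP₃, hQ⟩
    refine ⟨⟨P, ⟨hP, by omega⟩, fun Q ⟨hQ₁, hQ₃⟩ => by_contra fun hQP => ?_⟩, ?_⟩
    · exact absurd (hQ Q hQ₁ hQP) (by omega)
    · rintro ⟨Q, hQ₁, hQ₄⟩
      by_cases hQP : Q = P
      · subst hQP
        omega
      · exact absurd (hQ Q hQ₁ hQP) (by omega)
  · rintro ⟨⟨P, ⟨hP, hP₃⟩, huniq⟩, hno⟩
    refine ⟨P, hP, ?_, fun Q hQ hQP => by_contra fun hQ₂ => hQP (huniq Q ⟨hQ, by omega⟩)⟩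
    by_contra hne
    exact hno ⟨P, hP, by omega⟩

variable [FiniteDimensional K W]

theorem finrank_inf_eq_one {L M : Submodule K W} (hW : finrank K W = 3)
    (hL : finrank K L = 2) (hM : finrank K M = 2) (hLM : L ≠ M) : finrank K ↥(L ⊓ M) = 1 := by
  have hsup : finrank K ↥(L ⊔ M) ≤ 3 := hW ▸ Submodule.finrank_le _
  have hLsup : finrank K ↥(L ⊔ M) ≠ 2 := fun h => hLM <|
    (Submodule.eq_of_le_of_finrank_le le_sup_left (by omega)).trans
      (Submodule.eq_of_le_of_finrank_le le_sup_right (by omega)).symm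
  have := Submodule.finrank_sup_add_finrank_inf_eq L M
  have := Submodule.finrank_mono (le_sup_left : L ≤ L ⊔ M)
  omega

theorem eq_inf_of_le_of_le {P L M : Submodule K W} (hW : finrank K W = 3) (hP : finrank K P = 1)
    (hL : finrank K L = 2) (hM : finrank K M = 2) (hLM : L ≠ M) (hPL : P ≤ L) (hPM : P ≤ M) :
    P = L ⊓ M :=
  Submodule.eq_of_le_of_finrank_le (le_inf hPL hPM) (by rw [finrank_inf_eq_one hW hL hM hLM, hP])

theorem finrank_sup_eq_two {P Q : Submodule K W} (hP : finrank K P = 1) (hQ : finrank K Q = 1)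
    (hPQ : P ≠ Q) : finrank K ↥(P ⊔ Q) = 2 := by
  have hinf : finrank K ↥(P ⊓ Q) ≠ 1 := fun h => hPQ <|
    (Submodule.eq_of_le_of_finrank_le inf_le_left (by omega)).symm.trans
      (Submodule.eq_of_le_of_finrank_le inf_le_right (by omega))
  have := Submodule.finrank_sup_add_finrank_inf_eq P Q
  have := Submodule.finrank_mono (inf_le_left : P ⊓ Q ≤ P)
  omega

theorem eq_sup_of_le_of_le {P Q L : Submodule K W} (hP : finrank K P = 1) (hQ : finrank K Q = 1)
    (hPQ : P ≠ Q) (hL : finrank K L = 2) (hPL : P ≤ L) (hQL : Q ≤ L) : L = P ⊔ Q :=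
  (Submodule.eq_of_le_of_finrank_le (sup_le hPL hQL)
    (by rw [finrank_sup_eq_two hP hQ hPQ, hL])).symm

theorem card_filter_le_le_one_of_concurrent {P Q : Submodule K W} {s : Finset (Submodule K W)}
    (hW : finrank K W = 3) (hP : finrank K P = 1) (hQ : finrank K Q = 1) (hPQ : P ≠ Q)
    (hs : ∀ L ∈ s, finrank K L = 2 ∧ P ≤ L) : #{L ∈ s | Q ≤ L} ≤ 1 := by
  refine card_le_one.2 fun L hL M hM => by_contra fun hLM => hPQ ?_
  rw [mem_filter] at hL hM
  rw [eq_inf_of_le_of_le hW hP (hs L hL.1).1 (hs M hM.1).1 hLM (hs L hL.1).2 (hs M hM.1).2,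
    eq_inf_of_le_of_le hW hQ (hs L hL.1).1 (hs M hM.1).1 hLM hL.2 hM.2]

theorem inf_id_eq_of_card_eq_two {R : Submodule K W} {D : Finset (Submodule K W)}
    (hW : finrank K W = 3) (hR : finrank K R = 1) (hD : ∀ L ∈ D, finrank K L = 2 ∧ R ≤ L) (hD₂ : #D = 2) :
    D.inf id = R := by
  obtain ⟨L, M, hLM, rfl⟩ := card_eq_two.1 hD₂
  have hL := hD L (by simp)
  have hM := hD M (by simp)
  rw [inf_insert, inf_singleton, id, id]
  exact (eq_inf_of_le_of_le hW hR hL.1 hM.1 hLM hL.2 hM.2).symm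

theorem finrank_comap_mkQ (P : Submodule K W) (N : Submodule K (W ⧸ P)) :
    finrank K ↥(N.comap P.mkQ) = finrank K N + finrank K P := by
  have hrange : LinearMap.range (P.mkQ.domRestrict (N.comap P.mkQ)) = N := by
    rw [LinearMap.range_domRestrict, Submodule.map_comap_eq_of_surjective P.mkQ_surjective]
  have hker : finrank K ↥(LinearMap.ker (P.mkQ.domRestrict (N.comap P.mkQ))) = finrank K P := by
    rw [LinearMap.ker_domRestrict, Submodule.ker_mkQ]
    exact (Submodule.comapSubtypeEquivOfLe (Submodule.le_comap_mkQ P N)).finrank_eq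
  rw [← LinearMap.finrank_range_add_finrank_ker (P.mkQ.domRestrict _), hrange, hker]

instance [Finite K] : Finite (Submodule K W) :=
  haveI : Finite W := Module.finite_of_finite K
  inferInstance

variable (K W) in
noncomputable def points [Finite K] : Finset (Submodule K W) :=
  (Set.toFinite {P : Submodule K W | finrank K P = 1}).toFinset

noncomputable def pointsOn [Finite K] (L : Submodule K W) : Finset (Submodule K W) :=
  (Set.toFinite {P : Submodule K W | finrank K P = 1 ∧ P ≤ L}).toFinset

noncomputable def linesThrough [Finite K] (P : Submodule K W) : Finset (Submodule K W) :=
  (Set.toFinite {L : Submodule K W | finrank K L = 2 ∧ P ≤ L}).toFinset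

noncomputable def pointsOff [Finite K] (T : Finset (Submodule K W)) : Finset (Submodule K W) :=
  (Set.toFinite {R : Submodule K W | finrank K R = 1 ∧ ∀ L ∈ T, ¬ R ≤ L}).toFinset

section counting

variable [Finite K]

@[simp] theorem mem_points {P : Submodule K W} : P ∈ points K W ↔ finrank K P = 1 :=
  Set.Finite.mem_toFinset _

@[simp] theorem mem_pointsOn {P L : Submodule K W} : P ∈ pointsOn L ↔ finrank K P = 1 ∧ P ≤ L :=
  Set.Finite.mem_toFinset _

@[simp] theorem mem_linesThrough {P L : Submodule K W} :
    L ∈ linesThrough P ↔ finrank K L = 2 ∧ P ≤ L :=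
  Set.Finite.mem_toFinset _

theorem mem_linesThrough_sdiff {P R L : Submodule K W} :
    L ∈ linesThrough R \ linesThrough P ↔ (finrank K L = 2 ∧ R ≤ L) ∧ ¬ P ≤ L := by
  simp only [mem_sdiff, mem_linesThrough, not_and]
  exact and_congr_right fun h => ⟨fun h' => h' h.1, fun h' _ => h'⟩

@[simp] theorem mem_pointsOff {R : Submodule K W} {T : Finset (Submodule K W)} :
    R ∈ pointsOff T ↔ finrank K R = 1 ∧ ∀ L ∈ T, ¬ R ≤ L :=
  Set.Finite.mem_toFinset _

theorem card_points {n : ℕ} (hW : finrank K W = n) :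
    #(points K W) = ∑ i ∈ range n, Nat.card K ^ i := by
  rw [← Projectivization.card_of_finrank K W hW,
    Nat.card_congr (Projectivization.equivSubmodule K W), ← Nat.card_eq_finsetCard]
  exact Nat.card_congr (Equiv.subtypeEquivRight fun _ => mem_points)

theorem card_pointsOn {L : Submodule K W} (hL : finrank K L = 2) :
    #(pointsOn L) = Nat.card K + 1 := by
  have hcard : #(points K L) = Nat.card K + 1 := by
    rw [card_points hL]
    simp
  rw [← hcard]
  refine card_nbij' (fun P => P.comap L.subtype) (fun H => H.map L.subtype) ?_ ?_ ?_ ?_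
  · intro P hP
    simp only [mem_coe, mem_points, mem_pointsOn] at hP ⊢
    rw [← hP.1]
    exact (Submodule.comapSubtypeEquivOfLe hP.2).finrank_eq
  · intro H hH
    simp only [mem_coe, mem_points, mem_pointsOn] at hH ⊢
    exact ⟨by rw [Submodule.finrank_map_subtype_eq, hH], Submodule.map_subtype_le L H⟩
  · intro P hP
    simp only [mem_coe, mem_pointsOn] at hP
    simp only [Submodule.map_comap_subtype, inf_eq_right.2 hP.2]
  · intro H _
    exact Submodule.comap_map_eq_of_injective L.injective_subtype H

theorem card_linesThrough {P : Submodule K W} (hW : finrank K W = 3) (hP : finrank K P = 1) :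
    #(linesThrough P) = Nat.card K + 1 := by
  have hquot : finrank K (W ⧸ P) = 2 := by
    have := P.finrank_quotient_add_finrank
    omega
  have hcard : #(points K (W ⧸ P)) = Nat.card K + 1 := by
    rw [card_points hquot]
    simp
  rw [← hcard]
  refine card_nbij' (fun L => L.map P.mkQ) (fun N => N.comap P.mkQ) ?_ ?_ ?_ ?_
  · intro L hL
    simp only [mem_coe, mem_points, mem_linesThrough] at hL ⊢
    have := finrank_comap_mkQ P (L.map P.mkQ)
    rw [Submodule.comap_map_mkQ, sup_eq_right.2 hL.2] at this
    omega
  · intro N hN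
    simp only [mem_coe, mem_points, mem_linesThrough] at hN ⊢
    exact ⟨by rw [finrank_comap_mkQ, hN, hP], Submodule.le_comap_mkQ P N⟩
  · intro L hL
    simp only [mem_coe, mem_linesThrough] at hL
    simp only [Submodule.comap_map_mkQ, sup_eq_right.2 hL.2]
  · intro N _
    exact Submodule.map_comap_eq_of_surjective P.mkQ_surjective N

theorem card_linesThrough_sdiff {P R : Submodule K W} (hW : finrank K W = 3)
    (hP : finrank K P = 1) (hR : finrank K R = 1) (hPR : P ≠ R) :
    #(linesThrough R \ linesThrough P) = Nat.card K := by
  have hinter : linesThrough P ∩ linesThrough R = {P ⊔ R} := by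
    ext L
    simp only [mem_inter, mem_linesThrough, mem_singleton]
    constructor
    · rintro ⟨⟨hL, hPL⟩, -, hRL⟩
      exact eq_sup_of_le_of_le hP hR hPR hL hPL hRL
    · rintro rfl
      exact ⟨⟨finrank_sup_eq_two hP hR hPR, le_sup_left⟩,
        finrank_sup_eq_two hP hR hPR, le_sup_right⟩
  rw [card_sdiff, hinter, card_singleton, card_linesThrough hW hR, Nat.add_sub_cancel]

theorem card_pointsOff {P : Submodule K W} {T : Finset (Submodule K W)} (hW : finrank K W = 3)
    (hP : finrank K P = 1) (hT : T ⊆ linesThrough P) (hT₀ : T.Nonempty) :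
    #(pointsOff T) = (Nat.card K + 1 - #T) * Nat.card K := by
  have hne : ∀ R ∈ pointsOff T, R ≠ P := by
    rintro R hR rfl
    obtain ⟨L, hL⟩ := hT₀
    exact (mem_pointsOff.1 hR).2 L hL (mem_linesThrough.1 (hT hL)).2
  have hmaps : Set.MapsTo (P ⊔ ·) (pointsOff T : Set _) (linesThrough P \ T : Finset _) := by
    intro R hR
    have hR' := mem_pointsOff.1 hR
    simp only [coe_sdiff, Set.mem_sdiff, mem_coe, mem_linesThrough]
    exact ⟨⟨finrank_sup_eq_two hP hR'.1 (hne R hR).symm, le_sup_left⟩,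
      fun h => hR'.2 _ h le_sup_right⟩
  rw [card_eq_sum_card_fiberwise hmaps, sum_const_nat (m := Nat.card K), card_sdiff_of_subset hT,
    card_linesThrough hW hP]
  intro M hM
  obtain ⟨⟨hM₂, hPM⟩, hMT⟩ : (finrank K M = 2 ∧ P ≤ M) ∧ M ∉ T := by simpa using hM
  have hfiber : {R ∈ pointsOff T | P ⊔ R = M} = (pointsOn M).erase P := by
    ext R
    simp only [mem_filter, mem_erase, mem_pointsOn]
    constructor
    · rintro ⟨hR, rfl⟩
      exact ⟨hne R hR, (mem_pointsOff.1 hR).1, le_sup_right⟩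
    · rintro ⟨hRP, hR, hRM⟩
      have hMeq := eq_sup_of_le_of_le hP hR hRP.symm hM₂ hPM hRM
      refine ⟨mem_pointsOff.2 ⟨hR, fun L hL hRL => hMT ?_⟩, hMeq.symm⟩
      rwa [hMeq, ← eq_sup_of_le_of_le hP hR hRP.symm (mem_linesThrough.1 (hT hL)).1
        (mem_linesThrough.1 (hT hL)).2 hRL]
  rw [hfiber, card_erase_of_mem (mem_pointsOn.2 ⟨hP, hPM⟩), card_pointsOn hM₂, Nat.add_sub_cancel]

end counting

variable (K W) in
noncomputable def configs [Finite K] : Finset (Σ _ : Submodule K W, Σ _ : Finset (Submodule K W),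
    Σ _ : Submodule K W, Finset (Submodule K W)) :=
  (points K W).sigma fun P => (powersetCard 3 (linesThrough P)).sigma fun T =>
    (pointsOff T).sigma fun R => powersetCard 2 (linesThrough R \ linesThrough P)

section configs

variable [Finite K]

theorem mem_configs {P R : Submodule K W} {T D : Finset (Submodule K W)} :
    ⟨P, T, R, D⟩ ∈ configs K W ↔ finrank K P = 1 ∧ (T ⊆ linesThrough P ∧ #T = 3) ∧
      R ∈ pointsOff T ∧ (D ⊆ linesThrough R \ linesThrough P ∧ #D = 2) := by
  simp only [configs, mem_sigma, mem_points, mem_powersetCard]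

theorem card_configs (hW : finrank K W = 3) :
    #(configs K W) = (Nat.card K ^ 2 + Nat.card K + 1) *
      ((Nat.card K + 1).choose 3 * ((Nat.card K - 2) * Nat.card K * (Nat.card K).choose 2)) := by
  set q := Nat.card K
  have hq : 2 ≤ q := Finite.one_lt_card
  have hpencils : ∀ P ∈ points K W, #((powersetCard 3 (linesThrough P)).sigma fun T =>
      (pointsOff T).sigma fun R => powersetCard 2 (linesThrough R \ linesThrough P)) =
      (q + 1).choose 3 * ((q - 2) * q * q.choose 2) := by
    intro P hP
    rw [mem_points] at hP
    rw [card_sigma, sum_const_nat (m := (q - 2) * q * q.choose 2), card_powersetCard,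
      card_linesThrough hW hP]
    intro T hT
    obtain ⟨hTP, hT3⟩ := mem_powersetCard.1 hT
    have hT₀ : T.Nonempty := card_pos.1 (by omega)
    rw [card_sigma, sum_const_nat (m := q.choose 2), card_pointsOff hW hP hTP hT₀, hT3,
      show q + 1 - 3 = q - 2 by omega]
    intro R hR
    have hRP : P ≠ R := by
      rintro rfl
      obtain ⟨L, hL⟩ := hT₀
      exact (mem_pointsOff.1 hR).2 L hL (mem_linesThrough.1 (hTP hL)).2
    rw [card_powersetCard, card_linesThrough_sdiff hW hP (mem_pointsOff.1 hR).1 hRP]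
  rw [configs, card_sigma, sum_const_nat hpencils, card_points hW]
  simp only [sum_range_succ, sum_range_zero]
  ring

theorem isOnlyTriplePoint_union {P R : Submodule K W} {T D : Finset (Submodule K W)}
    (hW : finrank K W = 3) (hP : finrank K P = 1) (hT : T ⊆ linesThrough P) (hT₃ : #T = 3)
    (hR : R ∈ pointsOff T) (hD : D ⊆ linesThrough R \ linesThrough P) (hD₂ : #D = 2) :
    IsOnlyTriplePoint (T ∪ D) P := by
  have hT' : ∀ L ∈ T, finrank K L = 2 ∧ P ≤ L := fun L hL => mem_linesThrough.1 (hT hL)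
  have hD' : ∀ L ∈ D, (finrank K L = 2 ∧ R ≤ L) ∧ ¬ P ≤ L := fun L hL =>
    mem_linesThrough_sdiff.1 (hD hL)
  refine ⟨hP, ?_, fun Q hQ hQP => ?_⟩
  · rw [filter_union_eq_left (fun L hL => (hT' L hL).2) fun L hL => (hD' L hL).2, hT₃]
  refine (card_le_card (filter_union _ _ _).le).trans ((card_union_le _ _).trans ?_)
  have hT₁ : #{L ∈ T | Q ≤ L} ≤ 1 := card_filter_le_le_one_of_concurrent hW hP hQ (Ne.symm hQP) hT'
  by_cases hQR : Q = R
  · subst hQR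
    rw [filter_false_of_mem fun L hL => (mem_pointsOff.1 hR).2 L hL, card_empty, zero_add]
    exact (card_filter_le _ _).trans hD₂.le
  · have := card_filter_le_le_one_of_concurrent hW (mem_pointsOff.1 hR).1 hQ (Ne.symm hQR)
      fun L hL => (hD' L hL).1
    omega

theorem mem_configs_of_isOnlyTriplePoint {S : Finset (Submodule K W)} {P : Submodule K W}
    (hW : finrank K W = 3) (hS₅ : #S = 5) (hS : ∀ L ∈ S, finrank K L = 2)
    (hP : IsOnlyTriplePoint S P) :
    ⟨P, {L ∈ S | P ≤ L}, {L ∈ S | ¬ P ≤ L}.inf id, {L ∈ S | ¬ P ≤ L}⟩ ∈ configs K W := by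
  obtain ⟨hP₁, hP₃, hQ⟩ := hP
  have hD₂ : #{L ∈ S | ¬ P ≤ L} = 2 := by
    have := card_filter_add_card_filter_not (s := S) (P ≤ ·)
    omega
  obtain ⟨L, M, hLM, hD⟩ := card_eq_two.1 hD₂
  have hL : L ∈ S ∧ ¬ P ≤ L := mem_filter.1 (hD ▸ mem_insert_self L {M})
  have hM : M ∈ S ∧ ¬ P ≤ M := mem_filter.1 (hD ▸ mem_insert_of_mem (mem_singleton_self M))
  have hR : {L ∈ S | ¬ P ≤ L}.inf id = L ⊓ M := by rw [hD, inf_insert, inf_singleton, id, id]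
  have hR₁ : finrank K ↥(L ⊓ M) = 1 := finrank_inf_eq_one hW (hS L hL.1) (hS M hM.1) hLM
  refine mem_configs.2 ⟨hP₁, ⟨fun N hN => ?_, hP₃⟩, mem_pointsOff.2 ⟨hR ▸ hR₁, ?_⟩,
    fun N hN => ?_, hD₂⟩
  · obtain ⟨hNS, hPN⟩ := mem_filter.1 hN
    exact mem_linesThrough.2 ⟨hS N hNS, hPN⟩
  · intro N hN hRN
    obtain ⟨hNS, hPN⟩ := mem_filter.1 hN
    rw [hR] at hRN
    have hLMP : L ⊓ M ≠ P := fun h => hL.2 (h ▸ inf_le_left)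
    have : 2 < #{N ∈ S | L ⊓ M ≤ N} := two_lt_card.2
      ⟨N, mem_filter.2 ⟨hNS, hRN⟩, L, mem_filter.2 ⟨hL.1, inf_le_left⟩,
        M, mem_filter.2 ⟨hM.1, inf_le_right⟩,
        fun h => hL.2 (h ▸ hPN), fun h => hM.2 (h ▸ hPN), hLM⟩
    exact absurd (hQ _ hR₁ hLMP) (by omega)
  · obtain ⟨hNS, hPN⟩ := mem_filter.1 hN
    exact mem_linesThrough_sdiff.2 ⟨⟨hS N hNS, inf_le hN⟩, hPN⟩

theorem eq_of_mem_configs_of_union_eq (hW : finrank K W = 3) {P P' R R' : Submodule K W}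
    {T T' D D' : Finset (Submodule K W)} (hx : ⟨P, T, R, D⟩ ∈ configs K W)
    (hy : ⟨P', T', R', D'⟩ ∈ configs K W) (h : T ∪ D = T' ∪ D') :
    (⟨P, T, R, D⟩ : Σ _ : Submodule K W, Σ _ : Finset (Submodule K W),
      Σ _ : Submodule K W, Finset (Submodule K W)) = ⟨P', T', R', D'⟩ := by
  obtain ⟨hP, ⟨hT, hT₃⟩, hR, hD, hD₂⟩ := mem_configs.1 hx
  obtain ⟨hP', ⟨hT', hT₃'⟩, hR', hD', hD₂'⟩ := mem_configs.1 hy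
  have hPP' : P = P' := by
    by_contra hne
    have h₂ := (isOnlyTriplePoint_union hW hP hT hT₃ hR hD hD₂).2.2 P' hP' (Ne.symm hne)
    have h₃ := (isOnlyTriplePoint_union hW hP' hT' hT₃' hR' hD' hD₂').2.1
    rw [h] at h₂
    omega
  subst hPP'
  have hTP : ∀ L ∈ T, P ≤ L := fun L hL => (mem_linesThrough.1 (hT hL)).2
  have hDP : ∀ L ∈ D, ¬ P ≤ L := fun L hL => (mem_linesThrough_sdiff.1 (hD hL)).2
  have hTP' : ∀ L ∈ T', P ≤ L := fun L hL => (mem_linesThrough.1 (hT' hL)).2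
  have hDP' : ∀ L ∈ D', ¬ P ≤ L := fun L hL => (mem_linesThrough_sdiff.1 (hD' hL)).2
  have hTT' : T = T' := by
    rw [← filter_union_eq_left hTP hDP, h, filter_union_eq_left hTP' hDP']
  have hDD' : D = D' := by
    rw [← filter_not_union_eq_right hTP hDP, h, filter_not_union_eq_right hTP' hDP']
  subst hTT' hDD'
  have hRR' : R = R' := by
    rw [← inf_id_eq_of_card_eq_two hW (mem_pointsOff.1 hR).1
        (fun L hL => (mem_linesThrough_sdiff.1 (hD hL)).1) hD₂,
      inf_id_eq_of_card_eq_two hW (mem_pointsOff.1 hR').1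
        (fun L hL => (mem_linesThrough_sdiff.1 (hD' hL)).1) hD₂]
  rw [hRR']

theorem card_eq_card_configs (hW : finrank K W = 3) :
    Nat.card {S : Finset (Submodule K W) //
      #S = 5 ∧ (∀ L ∈ S, finrank K L = 2) ∧ ∃ P, IsOnlyTriplePoint S P} = #(configs K W) := by
  rw [← Nat.card_eq_finsetCard]
  symm
  refine Nat.card_eq_of_bijective (fun x => ⟨x.1.2.1 ∪ x.1.2.2.2, ?_⟩) ⟨?_, ?_⟩
  · obtain ⟨⟨P, T, R, D⟩, hx⟩ := x
    obtain ⟨hP, ⟨hT, hT₃⟩, hR, hD, hD₂⟩ := mem_configs.1 hx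
    refine ⟨?_, fun L hL => ?_, P, isOnlyTriplePoint_union hW hP hT hT₃ hR hD hD₂⟩
    · rw [card_union_of_disjoint, hT₃, hD₂]
      exact disjoint_left.2 fun L hT' hD' => (mem_linesThrough_sdiff.1 (hD hD')).2
        (mem_linesThrough.1 (hT hT')).2
    · rcases mem_union.1 hL with hL | hL
      · exact (mem_linesThrough.1 (hT hL)).1
      · exact (mem_linesThrough_sdiff.1 (hD hL)).1.1
  · rintro ⟨⟨P, T, R, D⟩, hx⟩ ⟨⟨P', T', R', D'⟩, hy⟩ h
    exact Subtype.ext (eq_of_mem_configs_of_union_eq hW hx hy (congrArg Subtype.val h))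
  · rintro ⟨S, hS₅, hS, P, hP⟩
    exact ⟨⟨_, mem_configs_of_isOnlyTriplePoint hW hS₅ hS hP⟩,
      Subtype.ext (filter_union_filter_not_eq _ S)⟩

end configs

end ProjectivePlane

theorem card_five_lines_one_triple_point_general (q : ℕ)
    (F : Type) [Field F] [Fintype F] (hF : Fintype.card F = q) :
    (Nat.card {S : Finset (Submodule F (Fin 3 → F)) //
        S.card = 5 ∧ (∀ L ∈ S, Module.finrank F L = 2) ∧
        (∃! P : Submodule F (Fin 3 → F), Module.finrank F P = 1 ∧
          ∃ L₁ ∈ S, ∃ L₂ ∈ S, ∃ L₃ ∈ S, L₁ ≠ L₂ ∧ L₁ ≠ L₃ ∧ L₂ ≠ L₃ ∧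
            P ≤ L₁ ∧ P ≤ L₂ ∧ P ≤ L₃) ∧
        ¬∃ P : Submodule F (Fin 3 → F), Module.finrank F P = 1 ∧
          ∃ L₁ ∈ S, ∃ L₂ ∈ S, ∃ L₃ ∈ S, ∃ L₄ ∈ S,
            L₁ ≠ L₂ ∧ L₁ ≠ L₃ ∧ L₁ ≠ L₄ ∧ L₂ ≠ L₃ ∧ L₂ ≠ L₄ ∧ L₃ ≠ L₄ ∧
            P ≤ L₁ ∧ P ≤ L₂ ∧ P ≤ L₃ ∧ P ≤ L₄} : ℚ) =
    (1 / 12 : ℚ) * ((q : ℚ) - 2) *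
      ((q : ℚ) ^ 3 * ((q : ℚ) ^ 3 - 1) * ((q : ℚ) ^ 2 - 1)) := by
  have hW : finrank F (Fin 3 → F) = 3 := by simp
  have hq : 2 ≤ q := hF ▸ Fintype.one_lt_card
  rw [← Nat.card_congr (Equiv.subtypeEquivRight fun S => and_congr_right fun _ =>
      and_congr_right fun _ => ProjectivePlane.exists_isOnlyTriplePoint_iff S),
    ProjectivePlane.card_eq_card_configs hW, ProjectivePlane.card_configs hW,
    Nat.card_eq_fintype_card, hF]
  obtain ⟨m, rfl⟩ : ∃ m, q = m + 2 := ⟨q - 2, by omega⟩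
  rw [show m + 2 - 2 = m by omega, show m + 2 + 1 = m + 3 by ring]
  push_cast [Nat.cast_choose ℚ (show 3 ≤ m + 3 by omega), Nat.cast_choose_two, Nat.add_sub_cancel,
    Nat.factorial_succ]
  field_simp
  ring

/-- Let `q` be a prime power.  The number of 5-element sets of lines in
`ℙ²` over `𝔽_q` (lines being 2-dimensional linear subspaces of `𝔽_q³`, points being
1-dimensional subspaces) such that there is exactly one point lying on three of the five
lines and no point lies on four or more of the lines equals
`(1/12)·(q−2)·q³·(q³−1)·(q²−1)`. -/
theorem card_five_lines_one_triple_point (q : ℕ) (hq : IsPrimePow q)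
    (F : Type) [Field F] [Fintype F] (hF : Fintype.card F = q) :
    (Nat.card {S : Finset (Submodule F (Fin 3 → F)) //
        S.card = 5 ∧ (∀ L ∈ S, Module.finrank F L = 2) ∧
        (∃! P : Submodule F (Fin 3 → F), Module.finrank F P = 1 ∧
          ∃ L₁ ∈ S, ∃ L₂ ∈ S, ∃ L₃ ∈ S, L₁ ≠ L₂ ∧ L₁ ≠ L₃ ∧ L₂ ≠ L₃ ∧
            P ≤ L₁ ∧ P ≤ L₂ ∧ P ≤ L₃) ∧
        ¬∃ P : Submodule F (Fin 3 → F), Module.finrank F P = 1 ∧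
          ∃ L₁ ∈ S, ∃ L₂ ∈ S, ∃ L₃ ∈ S, ∃ L₄ ∈ S,
            L₁ ≠ L₂ ∧ L₁ ≠ L₃ ∧ L₁ ≠ L₄ ∧ L₂ ≠ L₃ ∧ L₂ ≠ L₄ ∧ L₃ ≠ L₄ ∧
            P ≤ L₁ ∧ P ≤ L₂ ∧ P ≤ L₃ ∧ P ≤ L₄} : ℚ) =
    (1 / 12 : ℚ) * ((q : ℚ) - 2) *
      ((q : ℚ) ^ 3 * ((q : ℚ) ^ 3 - 1) * ((q : ℚ) ^ 2 - 1)) :=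
  card_five_lines_one_triple_point_general q F hF
end
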